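/- arXiv:2209.04859 — 13 statements merged into one kernel-verified Lean document; each statement's English description precedes it below -/
import Mathlib

section
/- Define colorings $c_n : [\omega_n]^{n+1} \to \omega$ recursively: $c_1 : [\omega_1]^2 \to \omega$ is chosen so that every fiber $c_1(\cdot, \beta)$ on $\beta$ is injective, and $c_{n+1}(\alpha_0,\ldots,\alpha_n,\beta) = c_n(e_\beta(\alpha_0),\ldots,e_\beta(\alpha_n))$ where $e_\beta : \beta \to \omega_n$ is injective. Also define a distinguished element $a(\ast) \in a$ for $a \in [\omega_n]^{n+1}$: $a(\ast) = \min(a)$ when $n = 1$, and for $n > 1$, with $\beta = \max(a)$ and $a_1 = e_\beta[a \setminus \{\beta\}]$, set $a(\ast) = e_\beta^{-1}(a_1(\ast))$. Then for all $1 \leq n < \omega$ and all $a, b \in [\omega_n]^{n+1}$: if $a(\ast) \neq b(\ast)$ and $a \setminus \{a(\ast)\} = b \setminus \{b(\ast)\}$, then $c_n(a) \neq c_n(b)$. -/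
private lemma image_erase_injOn' (f : Ordinal → Ordinal) (s : Finset Ordinal) (x : Ordinal)
    (hx : x ∈ s) (hinj : ∀ y ∈ s, ∀ z ∈ s, f y = f z → y = z) :
    (s.image f).erase (f x) = (s.erase x).image f := by
  ext y
  simp only [Finset.mem_erase, Finset.mem_image]
  constructor
  · rintro ⟨hne, z, hz, rfl⟩
    exact ⟨z, ⟨fun h => hne (by rw [h]), hz⟩, rfl⟩
  · rintro ⟨z, ⟨hzx, hz⟩, rfl⟩
    exact ⟨fun h => hzx (hinj z hz x hx h), z, hz, rfl⟩

/-- Lemma on the recursively defined colorings `c_n : [ω_n]^{n+1} → ω` and the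
distinguished element `a(∗) = star n a`: if `a(∗) ≠ b(∗)` and
`a \ {a(∗)} = b \ {b(∗)}`, then `c_n(a) ≠ c_n(b)`.
The recursive definitions (via fixed injections `e β : β → ω_n` for `β < ω_{n+1}`)
are taken as hypotheses. -/
theorem stmt2
    (e : Ordinal → Ordinal → Ordinal)
    (c : ℕ → Finset Ordinal → ℕ)
    (star : ℕ → Finset Ordinal → Ordinal)
    -- `e β` is an injection from `β` into `ω_n`, for `β < ω_{n+1}`:
    (he_inj : ∀ n : ℕ, ∀ β < (Cardinal.aleph (n + 1)).ord,
      ∀ α₁ < β, ∀ α₂ < β, e β α₁ = e β α₂ → α₁ = α₂)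
    (he_lt : ∀ n : ℕ, ∀ β < (Cardinal.aleph (n + 1)).ord,
      ∀ α < β, e β α < (Cardinal.aleph n).ord)
    -- `c 1` has injective fibers:
    (hc1 : ∀ β < (Cardinal.aleph 1).ord, ∀ α₁ < β, ∀ α₂ < β,
      c 1 {α₁, β} = c 1 {α₂, β} → α₁ = α₂)
    -- recursive definition of `c (n+1)` from `c n` via `e β` where `β = max a`:
    (hcstep : ∀ n : ℕ, 1 ≤ n → ∀ a : Finset Ordinal, a.card = n + 2 →
      ∀ β ∈ a, (∀ α ∈ a, α ≤ β) → c (n + 1) a = c n ((a.erase β).image (e β)))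
    -- the distinguished element belongs to the set:
    (hstar_mem : ∀ n : ℕ, 1 ≤ n → ∀ a : Finset Ordinal, a.card = n + 1 → star n a ∈ a)
    -- for `n = 1`, the distinguished element is the minimum:
    (hstar1 : ∀ a : Finset Ordinal, a.card = 2 → ∀ x ∈ a, star 1 a ≤ x)
    -- recursive definition of `star (n+1)` via `e β` where `β = max a`:
    (hstarstep : ∀ n : ℕ, 1 ≤ n → ∀ a : Finset Ordinal, a.card = n + 2 →
      ∀ β ∈ a, (∀ α ∈ a, α ≤ β) →
        star (n + 1) a ≠ β ∧
        e β (star (n + 1) a) = star n ((a.erase β).image (e β))) :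
    ∀ n : ℕ, 1 ≤ n → ∀ a b : Finset Ordinal,
      a.card = n + 1 → b.card = n + 1 →
      (∀ α ∈ a, α < (Cardinal.aleph n).ord) →
      (∀ α ∈ b, α < (Cardinal.aleph n).ord) →
      star n a ≠ star n b →
      a.erase (star n a) = b.erase (star n b) →
      c n a ≠ c n b := by
  intro n
  induction n with
  | zero => omega
  | succ m ih =>
    intro _ a b ha hb halt hblt hne herase hc
    rcases Nat.lt_or_ge m 1 with hm | hm
    · -- base case n = 1
      obtain rfl : m = 0 := by omega
      have hsa := hstar_mem 1 le_rfl a ha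
      have hsb := hstar_mem 1 le_rfl b hb
      have hcard : (a.erase (star 1 a)).card = 1 := by
        rw [Finset.card_erase_of_mem hsa, ha]
      obtain ⟨β, hβ⟩ := Finset.card_eq_one.mp hcard
      have hβ' : b.erase (star 1 b) = {β} := by rw [← herase]; exact hβ
      have hβa : β ∈ a := (Finset.erase_subset _ _) (hβ ▸ Finset.mem_singleton_self β)
      have hβb : β ∈ b := (Finset.erase_subset _ _) (hβ' ▸ Finset.mem_singleton_self β)
      have hsaβ : star 1 a ≠ β := by
        intro h
        have : β ∈ a.erase (star 1 a) := hβ ▸ Finset.mem_singleton_self β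
        exact (Finset.mem_erase.mp this).1 h.symm
      have hsbβ : star 1 b ≠ β := by
        intro h
        have : β ∈ b.erase (star 1 b) := hβ' ▸ Finset.mem_singleton_self β
        exact (Finset.mem_erase.mp this).1 h.symm
      have hsa_lt : star 1 a < β := lt_of_le_of_ne (hstar1 a ha β hβa) hsaβ
      have hsb_lt : star 1 b < β := lt_of_le_of_ne (hstar1 b hb β hβb) hsbβ
      have haeq : a = {star 1 a, β} := by
        have := Finset.insert_erase hsa
        rw [hβ] at this
        exact this.symm
      have hbeq : b = {star 1 b, β} := by
        have := Finset.insert_erase hsb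
        rw [hβ'] at this
        exact this.symm
      have hβlt : β < (Cardinal.aleph 1).ord := by
        have := halt β hβa
        simpa using this
      exact hne (hc1 β hβlt _ hsa_lt _ hsb_lt (by rw [← haeq, ← hbeq]; exact hc))
    · -- inductive step
      have hane : a.Nonempty := Finset.card_pos.mp (by omega)
      have hbne : b.Nonempty := Finset.card_pos.mp (by omega)
      set βa := a.max' hane with hβa_def
      set βb := b.max' hbne with hβb_def
      have hβa_mem : βa ∈ a := a.max'_mem hane
      have hβb_mem : βb ∈ b := b.max'_mem hbne
      have hβa_max : ∀ α ∈ a, α ≤ βa := fun α hα => a.le_max' α hα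
      have hβb_max : ∀ α ∈ b, α ≤ βb := fun α hα => b.le_max' α hα
      have ha2 : a.card = m + 2 := by omega
      have hb2 : b.card = m + 2 := by omega
      have hsa := hstarstep m hm a ha2 βa hβa_mem hβa_max
      have hsb := hstarstep m hm b hb2 βb hβb_mem hβb_max
      -- βa = βb
      have hββ : βa = βb := by
        have h1 : βa ∈ b := by
          have : βa ∈ a.erase (star (m + 1) a) := Finset.mem_erase.mpr ⟨fun h => hsa.1 h.symm, hβa_mem⟩
          exact (Finset.erase_subset _ _) (herase ▸ this)
        have h2 : βb ∈ a := by
          have : βb ∈ b.erase (star (m + 1) b) := Finset.mem_erase.mpr ⟨fun h => hsb.1 h.symm, hβb_mem⟩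
          exact (Finset.erase_subset _ _) (herase ▸ this)
        exact le_antisymm (hβb_max βa h1) (hβa_max βb h2)
      rw [← hββ] at hsb hβb_mem hβb_max
      have hβlt : βa < (Cardinal.aleph (m + 1)).ord := by
        have := halt βa hβa_mem
        simpa using this
      -- elements of erase are < βa
      have halta : ∀ α ∈ a.erase βa, α < βa := fun α hα =>
        lt_of_le_of_ne (hβa_max α ((Finset.erase_subset _ _) hα)) (Finset.mem_erase.mp hα).1
      have haltb : ∀ α ∈ b.erase βa, α < βa := fun α hα =>
        lt_of_le_of_ne (hβb_max α ((Finset.erase_subset _ _) hα)) (Finset.mem_erase.mp hα).1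
      have hinj : ∀ α₁ < βa, ∀ α₂ < βa, e βa α₁ = e βa α₂ → α₁ = α₂ := he_inj m βa hβlt
      have hinja : ∀ y ∈ a.erase βa, ∀ z ∈ a.erase βa, e βa y = e βa z → y = z :=
        fun y hy z hz h => hinj y (halta y hy) z (halta z hz) h
      have hinjb : ∀ y ∈ b.erase βa, ∀ z ∈ b.erase βa, e βa y = e βa z → y = z :=
        fun y hy z hz h => hinj y (haltb y hy) z (haltb z hz) h
      set a' := (a.erase βa).image (e βa) with ha'def
      set b' := (b.erase βa).image (e βa) with hb'def
      have ha'card : a'.card = m + 1 := by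
        rw [ha'def, Finset.card_image_of_injOn (fun y hy z hz h => hinja y hy z hz h),
          Finset.card_erase_of_mem hβa_mem, ha2]; omega
      have hb'card : b'.card = m + 1 := by
        rw [hb'def, Finset.card_image_of_injOn (fun y hy z hz h => hinjb y hy z hz h),
          Finset.card_erase_of_mem hβb_mem, hb2]; omega
      have ha'lt : ∀ α ∈ a', α < (Cardinal.aleph m).ord := by
        intro α hα
        obtain ⟨z, hz, rfl⟩ := Finset.mem_image.mp hα
        exact he_lt m βa hβlt z (halta z hz)
      have hb'lt : ∀ α ∈ b', α < (Cardinal.aleph m).ord := by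
        intro α hα
        obtain ⟨z, hz, rfl⟩ := Finset.mem_image.mp hα
        exact he_lt m βa hβlt z (haltb z hz)
      -- stars of a' and b'
      have hsa_lt : star (m + 1) a < βa :=
        lt_of_le_of_ne (hβa_max _ (hstar_mem (m + 1) (by omega) a ha)) hsa.1
      have hsb_lt : star (m + 1) b < βa :=
        lt_of_le_of_ne (hβb_max _ (hstar_mem (m + 1) (by omega) b hb)) hsb.1
      have hne' : star m a' ≠ star m b' := by
        rw [← hsa.2, ← hsb.2]
        intro h
        exact hne (hinj _ hsa_lt _ hsb_lt h)
      have hsa_mem_e : star (m + 1) a ∈ a.erase βa :=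
        Finset.mem_erase.mpr ⟨hsa.1, hstar_mem (m + 1) (by omega) a ha⟩
      have hsb_mem_e : star (m + 1) b ∈ b.erase βa :=
        Finset.mem_erase.mpr ⟨hsb.1, hstar_mem (m + 1) (by omega) b hb⟩
      have herase' : a'.erase (star m a') = b'.erase (star m b') := by
        rw [← hsa.2, ← hsb.2, ha'def, hb'def,
          image_erase_injOn' (e βa) _ _ hsa_mem_e hinja,
          image_erase_injOn' (e βa) _ _ hsb_mem_e hinjb,
          Finset.erase_right_comm, herase, Finset.erase_right_comm]
      have hceq : c m a' = c m b' := by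
        rw [ha'def, hb'def, ← hcstep m hm a ha2 βa hβa_mem hβa_max,
          ← hcstep m hm b hb2 βa hβb_mem hβb_max]
        exact hc
      exact ih hm a' b' ha'card hb'card ha'lt hb'lt hne' herase' hceq
end

section
/- For each $1 \leq n < \omega$ there is a coloring $c : (\omega_n)^{n+1} \to (n+2) \times \omega$ and a sequence of natural numbers $(m_k)_{k<\omega}$ such that, for every $k < \omega$ and every sequence $A_0, \ldots, A_n$ of subsets of $\omega_n$ each of size $m_k$, the image $c[\prod_{i \leq n} A_i]$ has more than $k$ elements. -/
universe u
open Cardinal Set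

theorem existsE (c : Cardinal.{u}) (hc : ℵ₀ ≤ c) (β : Ordinal.{u}) :
    ∃ e : Ordinal.{u} → Ordinal.{u},
      (∀ α, e α < c.ord) ∧ (β.card ≤ c → Set.InjOn e (Set.Iio β)) := by
  have h0 : (0 : Ordinal.{u}) < c.ord := by
    rw [Cardinal.lt_ord, Ordinal.card_zero]
    exact lt_of_lt_of_le aleph0_pos hc
  by_cases h : β.card ≤ c
  · have hmk : #(Set.Iio β) ≤ #(Set.Iio c.ord) := by
      rw [Ordinal.mk_Iio_ordinal, Ordinal.mk_Iio_ordinal, Cardinal.card_ord]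
      exact Cardinal.lift_le.mpr h
    obtain ⟨emb⟩ := (Cardinal.le_def _ _).mp hmk
    refine ⟨fun α => if hα : α < β then (emb ⟨α, hα⟩).1 else 0, fun α => ?_, fun _ => ?_⟩
    · by_cases hα : α < β
      · simp only [dif_pos hα]; exact (emb ⟨α, hα⟩).2
      · simp only [dif_neg hα]; exact h0
    · intro x hx y hy hxy
      simp only [Set.mem_Iio] at hx hy
      simp only [dif_pos hx, dif_pos hy] at hxy
      have := emb.injective (Subtype.ext hxy)
      exact congrArg Subtype.val this
  · exact ⟨fun _ => 0, fun _ => h0, fun hh => absurd hh h⟩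

noncomputable def Efun (c : Cardinal.{u}) (hc : ℵ₀ ≤ c) (β : Ordinal.{u}) :
    Ordinal.{u} → Ordinal.{u} :=
  (existsE c hc β).choose

theorem Efun_lt (c : Cardinal.{u}) (hc : ℵ₀ ≤ c) (β α : Ordinal.{u}) : Efun c hc β α < c.ord :=
  (existsE c hc β).choose_spec.1 α

theorem Efun_injOn (c : Cardinal.{u}) (hc : ℵ₀ ≤ c) {β : Ordinal.{u}} (h : β.card ≤ c) :
    Set.InjOn (Efun c hc β) (Set.Iio β) :=
  (existsE c hc β).choose_spec.2 h

theorem existsN : ∃ N : Ordinal.{u} → ℕ, Set.InjOn N (Set.Iio (Cardinal.aleph 0).ord) := by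
  have hmk : #(Set.Iio (Cardinal.aleph (0:Ordinal)).ord) ≤ #(ULift.{u+1} ℕ) := by
    rw [Ordinal.mk_Iio_ordinal, Cardinal.card_ord, Cardinal.aleph_zero, Cardinal.mk_uLift,
      Cardinal.mk_nat, Cardinal.lift_aleph0]
    exact le_of_eq Cardinal.lift_aleph0.symm
  obtain ⟨emb⟩ := (Cardinal.le_def _ _).mp hmk
  refine ⟨fun α => if hα : α < (Cardinal.aleph 0).ord then (emb ⟨α, hα⟩).down else 0, ?_⟩
  intro x hx y hy hxy
  simp only [Set.mem_Iio] at hx hy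
  simp only [dif_pos hx, dif_pos hy] at hxy
  have := emb.injective (by exact ULift.ext _ _ hxy)
  exact congrArg Subtype.val this

noncomputable def pivot {n : ℕ} (f : Fin (n + 1) → Ordinal.{u}) : Fin (n + 1) :=
  (Finite.exists_max f).choose

theorem pivot_spec {n : ℕ} (f : Fin (n + 1) → Ordinal.{u}) : ∀ j, f j ≤ f (pivot f) :=
  (Finite.exists_max f).choose_spec

theorem pivot_eq {n : ℕ} (f : Fin (n + 1) → Ordinal.{u}) (i₀ : Fin (n + 1))
    (h : ∀ j, j ≠ i₀ → f j < f i₀) : pivot f = i₀ := by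
  by_contra hne
  exact absurd (pivot_spec f i₀) (not_le.mpr (h _ hne))

theorem prodFinite {N : ℕ} (A : Fin N → Finset Ordinal.{u}) :
    {f : Fin N → Ordinal.{u} | ∀ i, f i ∈ A i}.Finite := by
  apply (Set.Finite.pi (fun i => (A i).finite_toSet)).subset
  intro f hf
  exact fun i _ => hf i

theorem auxd (n : ℕ) : ∃ d : (Fin (n + 1) → Ordinal.{u}) → ℕ, ∃ m : ℕ → ℕ,
    ∀ k : ℕ, ∀ A : Fin (n + 1) → Finset Ordinal.{u},
      (∀ i, m k ≤ (A i).card) →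
      (∀ i, ∀ α ∈ A i, α < (Cardinal.aleph n).ord) →
      k < (d '' {f | ∀ i, f i ∈ A i}).ncard := by
  classical
  induction n with
  | zero =>
    obtain ⟨N, hN⟩ := existsN.{u}
    refine ⟨fun f => N (f 0), fun k => k + 1, fun k A hcard hlt => ?_⟩
    have himg : (fun f : Fin 1 → Ordinal.{u} => N (f 0)) '' {f | ∀ i, f i ∈ A i}
        = N '' ↑(A 0) := by
      ext x
      constructor
      · rintro ⟨f, hf, rfl⟩
        exact ⟨f 0, hf 0, rfl⟩
      · rintro ⟨α, hα, rfl⟩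
        exact ⟨fun _ => α, fun i => by rw [Fin.eq_zero i]; exact hα, rfl⟩
    rw [himg, Set.ncard_image_of_injOn, Set.ncard_coe_finset]
    · calc k < k + 1 := Nat.lt_succ_self k
        _ ≤ (A 0).card := hcard 0
    · intro x hx y hy hxy
      have h0 : ((0:ℕ) : Ordinal) = (0 : Ordinal) := by norm_num
      refine hN ?_ ?_ hxy
      · have := hlt 0 x hx; rwa [h0] at this
      · have := hlt 0 y hy; rwa [h0] at this
  | succ n ih =>
    obtain ⟨d, m, hd⟩ := ih
    set c : Cardinal.{u} := Cardinal.aleph (n : Ordinal) with hcdef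
    have hc : ℵ₀ ≤ c := aleph0_le_aleph _
    refine ⟨fun f => Nat.pair (pivot f).val
        (d (fun j => Efun c hc (f (pivot f)) (f ((pivot f).succAbove j)))),
      fun k => m k + 1, fun k A hcard hlt => ?_⟩
    -- the overall maximum β
    have hT : (Finset.univ.biUnion A).Nonempty := by
      refine Finset.Nonempty.mono (Finset.subset_biUnion_of_mem A (Finset.mem_univ 0)) ?_
      exact Finset.card_pos.mp (lt_of_lt_of_le (Nat.succ_pos _) (hcard 0))
    set β := (Finset.univ.biUnion A).max' hT with hβdef
    obtain ⟨i₀, _, hi₀⟩ := Finset.mem_biUnion.mp ((Finset.univ.biUnion A).max'_mem hT)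
    have hle : ∀ i, ∀ α ∈ A i, α ≤ β := fun i α hα =>
      Finset.le_max' _ _ (Finset.mem_biUnion.mpr ⟨i, Finset.mem_univ i, hα⟩)
    have hβcard : β.card ≤ c := by
      have hβlt := hlt i₀ β hi₀
      have hcast : ((n + 1 : ℕ) : Ordinal) = Order.succ (n : Ordinal) := by
        rw [Nat.cast_succ, Ordinal.add_one_eq_succ]
      rw [hcast, Cardinal.aleph_succ] at hβlt
      exact Order.lt_succ_iff.mp (Cardinal.lt_ord.mp hβlt)
    -- the shrunken sets and their images below ℵ_n
    set A' : Fin (n + 1) → Finset Ordinal.{u} :=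
      fun j => (A (i₀.succAbove j)).erase β with hA'def
    have hA'lt : ∀ j, ∀ α ∈ A' j, α < β := fun j α hα =>
      lt_of_le_of_ne (hle _ _ (Finset.mem_of_mem_erase hα)) (Finset.ne_of_mem_erase hα)
    set B : Fin (n + 1) → Finset Ordinal.{u} :=
      fun j => (A' j).image (Efun c hc β) with hBdef
    have hBcard : ∀ j, m k ≤ (B j).card := by
      intro j
      have h1 : (A' j).card = (B j).card := by
        rw [hBdef]
        exact (Finset.card_image_of_injOn ((Efun_injOn c hc hβcard).mono
          (fun α hα => hA'lt j α hα))).symm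
      rw [← h1, hA'def]
      calc m k ≤ (A (i₀.succAbove j)).card - 1 :=
            Nat.le_pred_of_lt (lt_of_lt_of_le (Nat.lt_succ_self _) (hcard _))
        _ ≤ ((A (i₀.succAbove j)).erase β).card := Finset.pred_card_le_card_erase
    have hBlt : ∀ j, ∀ α ∈ B j, α < (Cardinal.aleph (n : Ordinal)).ord := by
      intro j α hα
      obtain ⟨γ, _, rfl⟩ := Finset.mem_image.mp hα
      exact Efun_lt c hc β γ
    have hk := hd k B hBcard hBlt
    -- transfer
    have hinj : Function.Injective (fun x : ℕ => Nat.pair i₀.val x) :=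
      fun a b h => (Nat.pair_eq_pair.mp h).2
    have hsub : (fun x : ℕ => Nat.pair i₀.val x) '' (d '' {g | ∀ j, g j ∈ B j}) ⊆
        (fun f => Nat.pair (pivot f).val
          (d (fun j => Efun c hc (f (pivot f)) (f ((pivot f).succAbove j))))) ''
          {f | ∀ i, f i ∈ A i} := by
      rintro x ⟨y, ⟨g, hg, rfl⟩, rfl⟩
      choose a ha hea using fun j => Finset.mem_image.mp (hg j)
      refine ⟨i₀.insertNth β a, ?_, ?_⟩
      · intro i
        rcases eq_or_ne i i₀ with rfl | hne
        · rw [Fin.insertNth_apply_same]; exact hi₀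
        · obtain ⟨j, rfl⟩ := Fin.exists_succAbove_eq hne
          rw [Fin.insertNth_apply_succAbove]
          exact Finset.mem_of_mem_erase (ha j)
      · have hpiv : pivot (i₀.insertNth β a) = i₀ := by
          refine pivot_eq _ _ (fun j hne => ?_)
          obtain ⟨j', rfl⟩ := Fin.exists_succAbove_eq hne
          rw [Fin.insertNth_apply_succAbove, Fin.insertNth_apply_same]
          exact hA'lt j' _ (ha j')
        simp only [hpiv, Fin.insertNth_apply_same, Fin.insertNth_apply_succAbove]
        congr 1
        exact congrArg d (funext fun j => hea j)
    calc k < (d '' {g | ∀ j, g j ∈ B j}).ncard := hk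
      _ = ((fun x : ℕ => Nat.pair i₀.val x) '' (d '' {g | ∀ j, g j ∈ B j})).ncard :=
          (Set.ncard_image_of_injective _ hinj).symm
      _ ≤ _ := Set.ncard_le_ncard hsub ((prodFinite A).image _)

/-- For each `1 ≤ n < ω` there are a coloring `c : (ω_n)^{n+1} → (n+2) × ω` and a
sequence `(m_k)` of natural numbers such that for every `k` and every sequence
`A_0, …, A_n` of subsets of `ω_n` each of size `m_k`, the image `c[∏ A_i]` has
more than `k` elements. -/
theorem stmt3 (n : ℕ) (hn : 1 ≤ n) :
    ∃ (c : (Fin (n + 1) → Ordinal) → Fin (n + 2) × ℕ) (m : ℕ → ℕ),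
      ∀ k : ℕ, ∀ A : Fin (n + 1) → Finset Ordinal,
        (∀ i, (A i).card = m k) →
        (∀ i, ∀ α ∈ A i, α < (Cardinal.aleph n).ord) →
        k < (c '' {f | ∀ i, f i ∈ A i}).ncard := by
  obtain ⟨d, m, hd⟩ := auxd n
  refine ⟨fun f => ((0 : Fin (n + 2)), d f), m, fun k A hcard hlt => ?_⟩
  have hk := hd k A (fun i => le_of_eq (hcard i).symm) hlt
  have himg : (fun f => ((0 : Fin (n + 2)), d f)) '' {f | ∀ i, f i ∈ A i} =
      (fun x : ℕ => ((0 : Fin (n + 2)), x)) '' (d '' {f | ∀ i, f i ∈ A i}) := by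
    rw [← Set.image_comp]; rfl
  rw [himg, Set.ncard_image_of_injective _
    (fun a b h => (Prod.ext_iff.mp h).2)]
  exact hk
end

section
/- Let $X_0$ and $X_1$ be perfect Polish spaces, suppose $X_0' \subseteq X_0$ is nowhere meager in $X_0$ and $X_1' \subseteq X_1$ is dense in $X_1$, let $r < \omega$ and let $\gamma : X_0' \times X_1' \to r$ be any coloring. Then there exist a color $j < r$, nonempty open sets $U_0 \subseteq X_0$, $U_1 \subseteq X_1$, a sequence $(x_n)_{n<\omega}$ of points of $X_0' \cap U_0$ that is dense in $U_0$, and a decreasing sequence $(Y_n)_{n<\omega}$ of subsets of $X_1' \cap U_1$ each dense in $U_1$, such that $\gamma(x_n, y) = j$ for all $n < \omega$ and all $y \in Y_{n+1}$. -/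
/-!
Call `(U₀, A, U₁, Z)` a box when `A` is nowhere meagre in the nonempty open set `U₀` and
`Z ⊆ U₁` is dense in the nonempty open set `U₁`. Start from the box `(X₀, X₀', X₁, X₁')`.
If colour `j` fails on a box, there are a dense `Y ⊆ Z` and an open `V ⊆ U₀` such that
every `x ∈ A ∩ V` leaves the `j`-coloured part of `Y` non-dense, i.e. misses it on some
basic open set; countably many basic sets cover `A ∩ V`, so one of the corresponding pieces
is non-meagre, hence nowhere meagre in some open set, and together with that basic set it
gives a smaller box avoiding colour `j`. With finitely many colours this stops, at a box
where some colour `j` never fails; the sequences are then built by enumerating a countable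
basis below `U₀` and shrinking `Y` one point at a time.
-/

open Set TopologicalSpace

section

variable {X X₀ X₁ ι : Type*} [TopologicalSpace X] [TopologicalSpace X₀] [TopologicalSpace X₁]

theorem exists_not_isMeagre_of_subset_iUnion {κ : Type*} [Countable κ] {B : Set X}
    {s : κ → Set X} (hB : ¬ IsMeagre B) (hcover : B ⊆ ⋃ i, s i) : ∃ i, ¬ IsMeagre (s i) := by
  by_contra! hall
  exact hB ((isMeagre_iUnion hall).mono hcover)

def NowhereMeagreIn (A U : Set X) : Prop :=
  ∀ O, IsOpen O → O ⊆ U → O.Nonempty → ¬ IsMeagre (A ∩ O)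

/- `B` is meagre on the union `G` of the basic open sets on which it is meagre, so `G` is not
dense, and `B` is nowhere meagre off `closure G`. -/
theorem exists_nowhereMeagreIn_of_not_isMeagre [SecondCountableTopology X] {B : Set X}
    (hB : ¬ IsMeagre B) : ∃ U, IsOpen U ∧ U.Nonempty ∧ NowhereMeagreIn B U := by
  obtain ⟨b, hbc, -, hb⟩ := exists_countable_basis X
  set G := ⋃ t ∈ {t ∈ b | IsMeagre (B ∩ t)}, t
  have hGo : IsOpen G := isOpen_biUnion fun t ht => hb.isOpen ht.1
  have hBG : IsMeagre (B ∩ G) := by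
    rw [inter_iUnion₂]
    exact isMeagre_biUnion (hbc.mono (sep_subset _ _)) fun t ht => ht.2
  refine ⟨(closure G)ᶜ, isClosed_closure.isOpen_compl, ?_, ?_⟩
  · rw [nonempty_compl]
    intro hGd
    have hGc : IsMeagre Gᶜ := by
      rw [IsMeagre, compl_compl]
      exact residual_of_dense_open hGo (dense_iff_closure_eq.2 hGd)
    refine hB ((hBG.union hGc).mono fun x hx => ?_)
    by_cases hxG : x ∈ G
    · exact Or.inl ⟨hx, hxG⟩
    · exact Or.inr hxG
  · rintro O hO hOG ⟨u, hu⟩ hBO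
    obtain ⟨t, htb, hut, htO⟩ := hb.exists_subset_of_mem_open hu hO
    have htG : t ∈ {t ∈ b | IsMeagre (B ∩ t)} := ⟨htb, hBO.mono (inter_subset_inter_right _ htO)⟩
    exact hOG hu (subset_closure (mem_biUnion htG hut))

theorem TopologicalSpace.IsTopologicalBasis.exists_disjoint_of_not_subset_closure
    {b : Set (Set X)} (hb : IsTopologicalBasis b) {U S : Set X} (hU : IsOpen U)
    (h : ¬ U ⊆ closure S) : ∃ t ∈ b, t.Nonempty ∧ t ⊆ U ∧ Disjoint t S := by
  obtain ⟨u, huU, hu⟩ := not_subset.1 h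
  obtain ⟨t, htb, hut, ht⟩ :=
    hb.exists_subset_of_mem_open (show u ∈ U ∩ (closure S)ᶜ from ⟨huU, hu⟩)
      (hU.inter isClosed_closure.isOpen_compl)
  exact ⟨t, htb, ⟨u, hut⟩, ht.trans inter_subset_left,
    disjoint_compl_left.mono (ht.trans inter_subset_right) subset_closure⟩

theorem exists_seq_isOpen_subset_forall_mem_dense [SecondCountableTopology X] {U : Set X}
    (hU : IsOpen U) (hne : U.Nonempty) :
    ∃ V : ℕ → Set X, (∀ n, IsOpen (V n) ∧ (V n).Nonempty ∧ V n ⊆ U) ∧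
      ∀ x : ℕ → X, (∀ n, x n ∈ V n) → U ⊆ closure (range x) := by
  obtain ⟨b, hbc, hbne, hb⟩ := exists_countable_basis X
  have hS : {t ∈ b | t ⊆ U}.Nonempty := by
    obtain ⟨u, hu⟩ := hne
    obtain ⟨t, htb, -, htU⟩ := hb.exists_subset_of_mem_open hu hU
    exact ⟨t, htb, htU⟩
  obtain ⟨V, hV⟩ := (hbc.mono (sep_subset _ _)).exists_eq_range hS
  have hVb (n : ℕ) : V n ∈ {t ∈ b | t ⊆ U} := hV ▸ mem_range_self n
  refine ⟨V, fun n => ⟨hb.isOpen (hVb n).1,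
    nonempty_iff_ne_empty.2 fun h => hbne (h ▸ (hVb n).1), (hVb n).2⟩, fun x hx u hu => ?_⟩
  rw [mem_closure_iff]
  intro O hO huO
  obtain ⟨t, htb, -, htO⟩ :=
    hb.exists_subset_of_mem_open (show u ∈ O ∩ U from ⟨huO, hu⟩) (hO.inter hU)
  obtain ⟨n, rfl⟩ : t ∈ range V := hV ▸ ⟨htb, htO.trans inter_subset_right⟩
  exact ⟨x n, (htO (hx n)).1, mem_range_self n⟩

structure IsNowhereMeagreByDense (U₀ A : Set X₀) (U₁ Z : Set X₁) : Prop where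
  isOpen_left : IsOpen U₀
  nonempty_left : U₀.Nonempty
  nowhereMeagreIn : NowhereMeagreIn A U₀
  isOpen_right : IsOpen U₁
  nonempty_right : U₁.Nonempty
  subset_right : Z ⊆ U₁
  dense_right : U₁ ⊆ closure Z

def IsColourSelector (γ : X₀ → X₁ → ι) (j : ι) (U₀ A : Set X₀) (U₁ Z : Set X₁) : Prop :=
  ∀ V, IsOpen V → V.Nonempty → V ⊆ U₀ → ∀ Y ⊆ Z, U₁ ⊆ closure Y →
    ∃ x ∈ A ∩ V, U₁ ⊆ closure {y ∈ Y | γ x y = j}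

namespace IsNowhereMeagreByDense

variable {U₀ A : Set X₀} {U₁ Z : Set X₁} {γ : X₀ → X₁ → ι}

theorem inter_left_nonempty (h : IsNowhereMeagreByDense U₀ A U₁ Z) : (A ∩ U₀).Nonempty :=
  nonempty_of_not_isMeagre (h.nowhereMeagreIn U₀ h.isOpen_left subset_rfl h.nonempty_left)

theorem set_right_nonempty (h : IsNowhereMeagreByDense U₀ A U₁ Z) : Z.Nonempty :=
  closure_nonempty_iff.1 (h.nonempty_right.mono h.dense_right)

theorem exists_avoiding_of_not_isColourSelector [SecondCountableTopology X₀]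
    [SecondCountableTopology X₁] {j : ι} (h : IsNowhereMeagreByDense U₀ A U₁ Z)
    (hj : ¬ IsColourSelector γ j U₀ A U₁ Z) :
    ∃ U₀' A' U₁' Z', IsNowhereMeagreByDense U₀' A' U₁' Z' ∧ A' ⊆ A ∧ Z' ⊆ Z ∧
      ∀ x ∈ A', ∀ y ∈ Z', γ x y ≠ j := by
  simp only [IsColourSelector, not_forall, not_exists, not_and] at hj
  obtain ⟨V, hVo, hVne, hVU, Y, hYZ, hYd, hfail⟩ := hj
  obtain ⟨b, hbc, -, hb⟩ := exists_countable_basis X₁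
  let T := {t ∈ b | t.Nonempty ∧ t ⊆ U₁}
  have : Countable T := (hbc.mono (sep_subset _ _)).to_subtype
  let piece : T → Set X₀ := fun t => {x ∈ A ∩ V | ∀ y ∈ Y ∩ t, γ x y ≠ j}
  have hcover : A ∩ V ⊆ ⋃ t, piece t := by
    intro x hx
    obtain ⟨t, htb, htne, htU, hdisj⟩ :=
      hb.exists_disjoint_of_not_subset_closure h.isOpen_right (hfail x hx)
    exact mem_iUnion.2 ⟨⟨t, htb, htne, htU⟩, hx,
      fun y hy hyj => disjoint_left.1 hdisj hy.2 (show y ∈ {y ∈ Y | γ x y = j} from ⟨hy.1, hyj⟩)⟩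
  obtain ⟨⟨t, htb, htne, htU⟩, ht⟩ := exists_not_isMeagre_of_subset_iUnion
    (h.nowhereMeagreIn V hVo hVU hVne) hcover
  obtain ⟨U₀', hU₀'o, hU₀'ne, hU₀'⟩ := exists_nowhereMeagreIn_of_not_isMeagre ht
  have hto : IsOpen t := hb.isOpen htb
  exact ⟨U₀', _, t, Y ∩ t, ⟨hU₀'o, hU₀'ne, hU₀', hto, htne, inter_subset_right,
      fun y hy => hto.closure_inter ⟨hYd (htU hy), hy⟩⟩,
    fun x hx => hx.1.1, fun y hy => hYZ hy.1, fun x hx => hx.2⟩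

theorem exists_isColourSelector [SecondCountableTopology X₀] [SecondCountableTopology X₁]
    (C : Finset ι) (h : IsNowhereMeagreByDense U₀ A U₁ Z) (hC : ∀ x ∈ A, ∀ y ∈ Z, γ x y ∈ C) :
    ∃ j U₀' A' U₁' Z', IsNowhereMeagreByDense U₀' A' U₁' Z' ∧ A' ⊆ A ∧ Z' ⊆ Z ∧
      IsColourSelector γ j U₀' A' U₁' Z' := by
  classical
  induction C using Finset.strongInduction generalizing U₀ A U₁ Z with
  | H C ih =>
  obtain ⟨x, hx⟩ := h.inter_left_nonempty
  obtain ⟨y, hy⟩ := h.set_right_nonempty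
  by_cases hj : IsColourSelector γ (γ x y) U₀ A U₁ Z
  · exact ⟨γ x y, U₀, A, U₁, Z, h, subset_rfl, subset_rfl, hj⟩
  obtain ⟨U₀', A', U₁', Z', h', hA, hZ, havoid⟩ := h.exists_avoiding_of_not_isColourSelector hj
  obtain ⟨j, U₀'', A'', U₁'', Z'', h'', hA', hZ', hsel⟩ :=
    ih (C.erase (γ x y)) (Finset.erase_ssubset (hC x hx.1 y hy)) h' fun x' hx' y' hy' =>
      Finset.mem_erase.2 ⟨havoid x' hx' y' hy', hC x' (hA hx') y' (hZ hy')⟩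
  exact ⟨j, U₀'', A'', U₁'', Z'', h'', hA'.trans hA, hZ'.trans hZ, hsel⟩

end IsNowhereMeagreByDense

theorem IsColourSelector.exists_seq [SecondCountableTopology X₀] {γ : X₀ → X₁ → ι} {j : ι}
    {U₀ A : Set X₀} {U₁ Z : Set X₁} (hsel : IsColourSelector γ j U₀ A U₁ Z)
    (hU₀ : IsOpen U₀) (hU₀ne : U₀.Nonempty) (hZ : U₁ ⊆ closure Z) :
    ∃ (x : ℕ → X₀) (Y : ℕ → Set X₁), (∀ n, x n ∈ A ∩ U₀) ∧ U₀ ⊆ closure (range x) ∧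
      (∀ n, Y n ⊆ Z) ∧ (∀ n, Y (n + 1) ⊆ Y n) ∧ (∀ n, U₁ ⊆ closure (Y n)) ∧
      ∀ n, ∀ y ∈ Y (n + 1), γ (x n) y = j := by
  obtain ⟨V, hV, hVdense⟩ := exists_seq_isOpen_subset_forall_mem_dense hU₀ hU₀ne
  have hstep : ∀ (n : ℕ) (Y : {Y : Set X₁ // Y ⊆ Z ∧ U₁ ⊆ closure Y}),
      ∃ x ∈ A ∩ V n, U₁ ⊆ closure {y ∈ Y.1 | γ x y = j} := fun n Y =>
    hsel (V n) (hV n).1 (hV n).2.1 (hV n).2.2 Y.1 Y.2.1 Y.2.2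
  choose x hxV hxY using hstep
  let Y : ℕ → {Y : Set X₁ // Y ⊆ Z ∧ U₁ ⊆ closure Y} := fun n =>
    Nat.rec ⟨Z, subset_rfl, hZ⟩
      (fun n Yn => ⟨{y ∈ Yn.1 | γ (x n Yn) y = j}, fun _ hy => Yn.2.1 hy.1, hxY n Yn⟩) n
  exact ⟨fun n => x n (Y n), fun n => (Y n).1,
    fun n => ⟨(hxV n _).1, (hV n).2.2 (hxV n _).2⟩, hVdense _ fun n => (hxV n _).2,
    fun n => (Y n).2.1, fun _ => sep_subset _ _, fun n => (Y n).2.2, fun _ _ hy => hy.2⟩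

end

theorem stmt5_general (X₀ X₁ : Type) [TopologicalSpace X₀] [TopologicalSpace X₁]
    [PolishSpace X₀] [PolishSpace X₁] [Nonempty X₀] [Nonempty X₁]
    (X₀' : Set X₀) (h₀ : ∀ U : Set X₀, IsOpen U → U.Nonempty → ¬ IsMeagre (X₀' ∩ U))
    (X₁' : Set X₁) (h₁ : Dense X₁')
    (r : ℕ) (γ : X₀ → X₁ → Fin r) :
    ∃ (j : Fin r) (U₀ : Set X₀) (U₁ : Set X₁) (x : ℕ → X₀) (Y : ℕ → Set X₁),
      IsOpen U₀ ∧ U₀.Nonempty ∧ IsOpen U₁ ∧ U₁.Nonempty ∧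
      (∀ n, x n ∈ X₀' ∩ U₀) ∧ U₀ ⊆ closure (Set.range x) ∧
      (∀ n, Y n ⊆ X₁' ∩ U₁) ∧ (∀ n, Y (n + 1) ⊆ Y n) ∧
      (∀ n, U₁ ⊆ closure (Y n)) ∧
      (∀ n, ∀ y ∈ Y (n + 1), γ (x n) y = j) := by
  have hbox : IsNowhereMeagreByDense univ X₀' univ X₁' :=
    ⟨isOpen_univ, univ_nonempty, fun O hO _ hOne => h₀ O hO hOne, isOpen_univ, univ_nonempty,
      subset_univ _, fun y _ => h₁ y⟩
  obtain ⟨j, U₀, A, U₁, Z, hbox', hA, hZ, hsel⟩ :=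
    hbox.exists_isColourSelector (Finset.univ : Finset (Fin r)) fun _ _ _ _ => Finset.mem_univ _
  obtain ⟨x, Y, hx, hxd, hYZ, hanti, hYd, hcol⟩ :=
    hsel.exists_seq hbox'.isOpen_left hbox'.nonempty_left hbox'.dense_right
  exact ⟨j, U₀, U₁, x, Y, hbox'.isOpen_left, hbox'.nonempty_left, hbox'.isOpen_right,
    hbox'.nonempty_right, fun n => ⟨hA (hx n).1, (hx n).2⟩, hxd,
    fun n y hy => ⟨hZ (hYZ n hy), hbox'.subset_right (hYZ n hy)⟩, hanti, hYd, hcol⟩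

/-- `DDF₂` holds in ZFC (strengthened form): if `X₀'` is a nowhere meager subset of a
perfect Polish space `X₀` and `X₁'` is a dense subset of a perfect Polish space `X₁`,
then for any finite coloring `γ` of `X₀' × X₁'` there are a color `j`, nonempty open
sets `U₀, U₁`, a sequence of points of `X₀' ∩ U₀` dense in `U₀`, and a decreasing
sequence of subsets of `X₁' ∩ U₁` each dense in `U₁`, witnessing a monochromatic
somewhere dense-by-dense-filter set of color `j`. -/
theorem stmt5 (X₀ X₁ : Type) [TopologicalSpace X₀] [TopologicalSpace X₁]
    [PolishSpace X₀] [PolishSpace X₁] [Nonempty X₀] [Nonempty X₁]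
    (hperf₀ : Perfect (Set.univ : Set X₀)) (hperf₁ : Perfect (Set.univ : Set X₁))
    (X₀' : Set X₀) (h₀ : ∀ U : Set X₀, IsOpen U → U.Nonempty → ¬ IsMeagre (X₀' ∩ U))
    (X₁' : Set X₁) (h₁ : Dense X₁')
    (r : ℕ) (γ : X₀ → X₁ → Fin r) :
    ∃ (j : Fin r) (U₀ : Set X₀) (U₁ : Set X₁) (x : ℕ → X₀) (Y : ℕ → Set X₁),
      IsOpen U₀ ∧ U₀.Nonempty ∧ IsOpen U₁ ∧ U₁.Nonempty ∧
      (∀ n, x n ∈ X₀' ∩ U₀) ∧ U₀ ⊆ closure (Set.range x) ∧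
      (∀ n, Y n ⊆ X₁' ∩ U₁) ∧ (∀ n, Y (n + 1) ⊆ Y n) ∧
      (∀ n, U₁ ⊆ closure (Y n)) ∧
      (∀ n, ∀ y ∈ Y (n + 1), γ (x n) y = j) :=
  stmt5_general X₀ X₁ X₀' h₀ X₁' h₁ r γ
end

section
/- Let $X_0, X_1$ be perfect Polish spaces and $\gamma : X_0 \times X_1 \to 2$ any 2-coloring. Then there exist a color $j < 2$, nonempty open sets $U_0 \subseteq X_0$, $U_1 \subseteq X_1$, and sets $Y_0 \subseteq X_0$, $Y_1 \subseteq X_1$, with $Y_0$ dense in $U_0$ and $Y_1$ dense in $U_1$, such that $\gamma(x,y) = j$ for all $(x,y) \in Y_0 \times Y_1$. -/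
/-!
Let `r x y` mean `γ (x, y) = 1`. If some somewhere dense grid avoids `r` entirely, it is
`0`-monochromatic. Otherwise every somewhere dense grid meets `r`, and we build dense sequences
`xᵢ`, `yₖ` with `r xᵢ yₖ` for all `i, k` by a back-and-forth construction, taking `xₙ`, `yₙ` in
the `n`-th basic open sets. It keeps two sets `D ⊆ X₀`, `E ⊆ X₁` of candidates which are
non-meagre in every nonempty open set; by the Baire category theorem we may start from
`D = X₀`, `E = X₁`.

The step: given such `D`, `E` and a nonempty open `V`, some `x ∈ D ∩ V` has a row
`E ∩ {y | r x y}` that is again everywhere non-meagre. Otherwise, each `x ∈ D ∩ V` has a basic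
open `W` on which its row is meagre, and for one `W` the set `Z` of such `x` is non-meagre,
hence somewhere dense. A countable dense `C ⊆ Z` has meagre union of rows inside `W`, so
`C × (W ∩ E \ ⋃_{x ∈ C} rows)` is a somewhere dense grid avoiding `r`.
-/

open Set TopologicalSpace

section BaireCategory

variable {X : Type*} [TopologicalSpace X]

def IsEverywhereNonMeagre (S : Set X) : Prop :=
  ∀ U, IsOpen U → U.Nonempty → ¬IsMeagre (S ∩ U)

theorem isEverywhereNonMeagre_univ [BaireSpace X] : IsEverywhereNonMeagre (univ : Set X) :=
  fun U hU hne => by simpa using not_isMeagre_of_isOpen hU hne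

theorem IsEverywhereNonMeagre.dense_diff {S M : Set X} (hS : IsEverywhereNonMeagre S)
    (hM : IsMeagre M) : Dense (S \ M) := by
  refine dense_iff_inter_open.2 fun U hU hne => ?_
  obtain ⟨x, ⟨hxS, hxU⟩, hxM⟩ := nonempty_of_not_isMeagre fun (h : IsMeagre ((S ∩ U) \ M)) =>
    hS U hU hne ((h.union hM).mono (subset_sdiff_union _ M))
  exact ⟨x, hxU, hxS, hxM⟩

theorem not_isNowhereDense_iff {s : Set X} :
    ¬IsNowhereDense s ↔ ∃ U, IsOpen U ∧ U.Nonempty ∧ U ⊆ closure s := by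
  refine ⟨fun h => ⟨_, isOpen_interior, nonempty_iff_ne_empty.2 h, interior_subset⟩, ?_⟩
  rintro ⟨U, hU, hne, hUs⟩ h
  exact hne.ne_empty (subset_empty_iff.1 (h ▸ interior_maximal hUs hU))

theorem exists_countable_subset_subset_closure [SecondCountableTopology X] (s : Set X) :
    ∃ t ⊆ s, t.Countable ∧ s ⊆ closure t := by
  obtain ⟨t, htc, htd⟩ := exists_countable_dense s
  refine ⟨(↑) '' t, Subtype.coe_image_subset s t, htc.image _, fun x hx => ?_⟩
  have : (⟨x, hx⟩ : s) ∈ closure t := htd.closure_eq ▸ mem_univ _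
  rwa [Topology.IsInducing.subtypeVal.closure_eq_preimage_closure_image] at this

variable (X) in
theorem exists_seq_nonempty_isOpen_subset [SecondCountableTopology X] [Nonempty X] :
    ∃ s : ℕ → Set X, (∀ n, IsOpen (s n) ∧ (s n).Nonempty) ∧
      ∀ U, IsOpen U → U.Nonempty → ∃ n, s n ⊆ U := by
  obtain ⟨b, hb, -, -⟩ :=
    (isBasis_countableBasis X).exists_subset_of_mem_open (mem_univ (Classical.arbitrary X))
      isOpen_univ
  obtain ⟨s, hs⟩ := (countable_countableBasis X).exists_eq_range ⟨b, hb⟩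
  refine ⟨s, fun n => ?_, fun U hU hne => ?_⟩
  · have hn : s n ∈ countableBasis X := hs ▸ mem_range_self n
    exact ⟨isOpen_of_mem_countableBasis hn, nonempty_of_mem_countableBasis hn⟩
  · obtain ⟨W, hW, -, hWU⟩ := (isBasis_countableBasis X).exists_nonempty_subset hne hU
    obtain ⟨n, rfl⟩ := hs ▸ hW
    exact ⟨n, hWU⟩

theorem denseRange_of_forall_mem {s : ℕ → Set X}
    (hs : ∀ U, IsOpen U → U.Nonempty → ∃ n, s n ⊆ U) {f : ℕ → X} (hf : ∀ n, f n ∈ s n) :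
    DenseRange f :=
  dense_iff_inter_open.2 fun U hU hne =>
    let ⟨n, hn⟩ := hs U hU hne
    ⟨f n, hn (hf n), mem_range_self n⟩

end BaireCategory

theorem exists_seq_forall_rel_of_step {α β : Type*} (r : α → β → Prop)
    (P : Set α → Set β → Prop) (sA : ℕ → Set α) (sB : ℕ → Set β) (h₀ : P univ univ)
    (hstep : ∀ n D E, P D E → ∃ x ∈ D ∩ sA n, ∃ y ∈ E ∩ sB n,
      r x y ∧ P (D ∩ {x' | r x' y}) (E ∩ {y' | r x y'})) :
    ∃ (x : ℕ → α) (y : ℕ → β), (∀ n, x n ∈ sA n) ∧ (∀ n, y n ∈ sB n) ∧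
      ∀ i k, r (x i) (y k) := by
  let S := {p : Set α × Set β // P p.1 p.2}
  have hstep' : ∀ (n : ℕ) (s : S), ∃ xy : α × β,
      (xy.1 ∈ s.1.1 ∩ sA n ∧ xy.2 ∈ s.1.2 ∩ sB n ∧ r xy.1 xy.2) ∧
        P (s.1.1 ∩ {x | r x xy.2}) (s.1.2 ∩ {y | r xy.1 y}) := fun n s =>
    let ⟨x, hx, y, hy, hxy, hP⟩ := hstep n _ _ s.2
    ⟨(x, y), ⟨hx, hy, hxy⟩, hP⟩
  choose pt hpt hP using hstep'
  let st : ℕ → S := fun n => Nat.rec ⟨(univ, univ), h₀⟩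
    (fun n s => ⟨(s.1.1 ∩ {x | r x (pt n s).2}, s.1.2 ∩ {y | r (pt n s).1 y}), hP n s⟩) n
  have hD : Antitone fun n => (st n).1.1 := antitone_nat_of_succ_le fun _ => inter_subset_left
  have hE : Antitone fun n => (st n).1.2 := antitone_nat_of_succ_le fun _ => inter_subset_left
  refine ⟨fun n => (pt n (st n)).1, fun n => (pt n (st n)).2, fun n => (hpt n _).1.2,
    fun n => (hpt n _).2.1.2, fun i k => ?_⟩
  -- `y k` was chosen in `E k ⊆ E (i + 1)` if `i < k`, and `x i` in `D i ⊆ D (k + 1)` if `k < i`.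
  rcases lt_trichotomy i k with hik | rfl | hki
  · exact (hE hik (hpt k (st k)).2.1.1).2
  · exact (hpt i _).2.2
  · exact (hD hki (hpt i (st i)).1.1).2

section Grid

variable {A B : Type*} [TopologicalSpace A] [TopologicalSpace B]

theorem exists_mem_inter_isEverywhereNonMeagre_inter [SecondCountableTopology A]
    [SecondCountableTopology B] {r : A → B → Prop}
    (hr : ∀ Y₀ Y₁, ¬IsNowhereDense Y₀ → ¬IsNowhereDense Y₁ → ∃ x ∈ Y₀, ∃ y ∈ Y₁, r x y)
    {D : Set A} {E : Set B} (hD : IsEverywhereNonMeagre D) (hE : IsEverywhereNonMeagre E)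
    {V : Set A} (hV : IsOpen V) (hVne : V.Nonempty) :
    ∃ x ∈ D ∩ V, IsEverywhereNonMeagre (E ∩ {y | r x y}) := by
  by_contra! h
  let Z : Set B → Set A := fun W => {x ∈ D ∩ V | IsMeagre (E ∩ {y | r x y} ∩ W)}
  have hcover : D ∩ V ⊆ ⋃ W ∈ countableBasis B, Z W := by
    intro x hx
    obtain ⟨U, hU, hUne, hUm⟩ : ∃ U, IsOpen U ∧ U.Nonempty ∧ IsMeagre (E ∩ {y | r x y} ∩ U) := by
      simpa [IsEverywhereNonMeagre] using h x hx
    obtain ⟨W, hW, -, hWU⟩ := (isBasis_countableBasis B).exists_nonempty_subset hUne hU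
    exact mem_biUnion hW ⟨hx, hUm.mono (inter_subset_inter_right _ hWU)⟩
  obtain ⟨W, hW, hZ⟩ := exists_of_not_isMeagre_biUnion (countable_countableBasis B)
    fun hm => hD V hV hVne (hm.mono hcover)
  obtain ⟨C, hCZ, hCc, hZC⟩ := exists_countable_subset_subset_closure (Z W)
  let M := ⋃ x ∈ C, E ∩ {y | r x y} ∩ W
  have hM : IsMeagre M := isMeagre_biUnion hCc fun x hx => (hCZ hx).2
  have hC : ¬IsNowhereDense C := fun hC => hZ (hC.closure.mono hZC).isMeagre
  have hWEM : ¬IsNowhereDense (W ∩ (E \ M)) := not_isNowhereDense_iff.2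
    ⟨W, isOpen_of_mem_countableBasis hW, nonempty_of_mem_countableBasis hW,
      (hE.dense_diff hM).open_subset_closure_inter (isOpen_of_mem_countableBasis hW)⟩
  obtain ⟨x, hx, y, ⟨hyW, hyE, hyM⟩, hxy⟩ := hr C _ hC hWEM
  exact hyM (mem_biUnion hx ⟨⟨hyE, hxy⟩, hyW⟩)

theorem exists_denseRange_forall_rel [SecondCountableTopology A] [SecondCountableTopology B]
    [BaireSpace A] [BaireSpace B] [Nonempty A] [Nonempty B] {r : A → B → Prop}
    (hr : ∀ Y₀ Y₁, ¬IsNowhereDense Y₀ → ¬IsNowhereDense Y₁ → ∃ x ∈ Y₀, ∃ y ∈ Y₁, r x y) :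
    ∃ (x : ℕ → A) (y : ℕ → B), DenseRange x ∧ DenseRange y ∧ ∀ i k, r (x i) (y k) := by
  obtain ⟨sA, hsA, hsA_sub⟩ := exists_seq_nonempty_isOpen_subset A
  obtain ⟨sB, hsB, hsB_sub⟩ := exists_seq_nonempty_isOpen_subset B
  have hr_swap : ∀ Y₁ Y₀, ¬IsNowhereDense Y₁ → ¬IsNowhereDense Y₀ →
      ∃ y ∈ Y₁, ∃ x ∈ Y₀, r x y := fun Y₁ Y₀ h₁ h₀ =>
    let ⟨x, hx, y, hy, hxy⟩ := hr Y₀ Y₁ h₀ h₁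
    ⟨y, hy, x, hx, hxy⟩
  obtain ⟨x, y, hx, hy, hxy⟩ := exists_seq_forall_rel_of_step r
    (fun D E => IsEverywhereNonMeagre D ∧ IsEverywhereNonMeagre E) sA sB
    ⟨isEverywhereNonMeagre_univ, isEverywhereNonMeagre_univ⟩ fun n D E ⟨hD, hE⟩ => by
      obtain ⟨x, hx, hEx⟩ :=
        exists_mem_inter_isEverywhereNonMeagre_inter hr hD hE (hsA n).1 (hsA n).2
      obtain ⟨y, hy, hDy⟩ :=
        exists_mem_inter_isEverywhereNonMeagre_inter hr_swap hEx hD (hsB n).1 (hsB n).2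
      exact ⟨x, hx, y, ⟨hy.1.1, hy.2⟩, hy.1.2, hDy, hEx⟩
  exact ⟨x, y, denseRange_of_forall_mem hsA_sub hx, denseRange_of_forall_mem hsB_sub hy, hxy⟩

end Grid

theorem stmt6_general (X₀ X₁ : Type) [TopologicalSpace X₀] [TopologicalSpace X₁]
    [PolishSpace X₀] [PolishSpace X₁] [Nonempty X₀] [Nonempty X₁]
    (γ : X₀ × X₁ → Fin 2) :
    ∃ (j : Fin 2) (U₀ : Set X₀) (U₁ : Set X₁) (Y₀ : Set X₀) (Y₁ : Set X₁),
      IsOpen U₀ ∧ U₀.Nonempty ∧ IsOpen U₁ ∧ U₁.Nonempty ∧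
      U₀ ⊆ closure Y₀ ∧ U₁ ⊆ closure Y₁ ∧
      Y₀ ×ˢ Y₁ ⊆ γ ⁻¹' {j} := by
  by_cases hr : ∀ (Y₀ : Set X₀) (Y₁ : Set X₁), ¬IsNowhereDense Y₀ → ¬IsNowhereDense Y₁ →
      ∃ x ∈ Y₀, ∃ y ∈ Y₁, γ (x, y) = 1
  · obtain ⟨x, y, hx, hy, hxy⟩ := exists_denseRange_forall_rel hr
    refine ⟨1, univ, univ, range x, range y, isOpen_univ, univ_nonempty, isOpen_univ,
      univ_nonempty, hx.closure_eq.ge, hy.closure_eq.ge, ?_⟩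
    rintro ⟨_, _⟩ ⟨⟨i, rfl⟩, ⟨k, rfl⟩⟩
    exact hxy i k
  · push Not at hr
    obtain ⟨Y₀, Y₁, h₀, h₁, hY⟩ := hr
    obtain ⟨U₀, hU₀, hU₀ne, hU₀Y⟩ := not_isNowhereDense_iff.1 h₀
    obtain ⟨U₁, hU₁, hU₁ne, hU₁Y⟩ := not_isNowhereDense_iff.1 h₁
    refine ⟨0, U₀, U₁, Y₀, Y₁, hU₀, hU₀ne, hU₁, hU₁ne, hU₀Y, hU₁Y, ?_⟩
    rintro ⟨x, y⟩ ⟨hx, hy⟩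
    have hxy : γ (x, y) ≠ 1 := hY x hx y hy
    show γ (x, y) = 0
    omega

/-- `PG₂` restricted to 2-colorings is true: for any 2-coloring of a product of two
perfect Polish spaces there is a monochromatic somewhere dense grid. -/
theorem stmt6 (X₀ X₁ : Type) [TopologicalSpace X₀] [TopologicalSpace X₁]
    [PolishSpace X₀] [PolishSpace X₁] [Nonempty X₀] [Nonempty X₁]
    (hperf₀ : Perfect (Set.univ : Set X₀)) (hperf₁ : Perfect (Set.univ : Set X₁))
    (γ : X₀ × X₁ → Fin 2) :
    ∃ (j : Fin 2) (U₀ : Set X₀) (U₁ : Set X₁) (Y₀ : Set X₀) (Y₁ : Set X₁),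
      IsOpen U₀ ∧ U₀.Nonempty ∧ IsOpen U₁ ∧ U₁.Nonempty ∧
      U₀ ⊆ closure Y₀ ∧ U₁ ⊆ closure Y₁ ∧
      Y₀ ×ˢ Y₁ ⊆ γ ⁻¹' {j} :=
  stmt6_general X₀ X₁ γ
end

section
/- Let $d \geq 1$, let $X_0, \ldots, X_{d-1}$ be perfect Polish spaces, and suppose $Z \subseteq \prod_{i<d} X_i$ is a dense-by-dense filter (DDF) set with respect to nonempty open sets $U_i \subseteq X_i$. Then for every $d$-tuple $\langle \mathcal{U}_0, \ldots, \mathcal{U}_{d-1} \rangle$ where each $\mathcal{U}_i$ is a finite collection of nonempty open subsets of $U_i$, there exist sets $Y_i \subseteq X_i$ such that each $Y_i$ meets every member of $\mathcal{U}_i$ and $\prod_{i<d} Y_i \subseteq Z$. -/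
/-- `IsDDF d X t U Z`: `Z ⊆ ∏_{i<d} U i` is a dense-by-dense-filter (DDF) set,
defined by recursion on `d`. For `d = 0` it means `Z` is nonempty; for `d + 1` it
means that `Z ⊆ ∏ U i`, the projection of `Z` to the first `d` coordinates is DDF,
and the fibers of `Z` over points of this projection generate a filter of subsets
of `X (last d)` that are dense in `U (last d)` (i.e. every finite intersection of
fibers is dense in `U (last d)`). -/
def IsDDF : (d : ℕ) → (X : Fin d → Type) → (t : ∀ i, TopologicalSpace (X i)) →
    (U : ∀ i, Set (X i)) → (Z : Set (∀ i, X i)) → Prop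
  | 0, _, _, _, Z => Z.Nonempty
  | (d + 1), X, t, U, Z =>
      Z ⊆ {f | ∀ i, f i ∈ U i} ∧
      IsDDF d (fun i => X i.castSucc) (fun i => t i.castSucc)
        (fun i => U i.castSucc) (Fin.init '' Z) ∧
      ∀ F : Finset (∀ i : Fin d, X i.castSucc), ↑F ⊆ Fin.init '' Z →
        U (Fin.last d) ⊆
          @closure _ (t (Fin.last d)) {y | ∀ x ∈ F, Fin.snoc x y ∈ Z}

/-- `Z` is somewhere-DDF: for some nonempty open sets `U i ⊆ X i`, `Z` is a DDF
subset of `∏ U i`. -/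
def SomewhereDDF (d : ℕ) (X : Fin d → Type) (t : ∀ i, TopologicalSpace (X i))
    (Z : Set (∀ i, X i)) : Prop :=
  ∃ U : ∀ i, Set (X i), (∀ i, @IsOpen _ (t i) (U i)) ∧ (∀ i, (U i).Nonempty) ∧
    IsDDF d X t U Z

theorem ddf_aux : ∀ (d : ℕ) (X : Fin d → Type) (t : ∀ i, TopologicalSpace (X i))
    (U : ∀ i, Set (X i)) (Z : Set (∀ i, X i)), IsDDF d X t U Z →
    ∀ (𝒰 : ∀ i, Finset (Set (X i))),
    (∀ i, ∀ V ∈ 𝒰 i, @IsOpen _ (t i) V ∧ V.Nonempty ∧ V ⊆ U i) →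
    ∃ Y : ∀ i, Set (X i), (∀ i, (Y i).Finite) ∧
      (∀ i, ∀ V ∈ 𝒰 i, (Y i ∩ V).Nonempty) ∧
      {f : ∀ i, X i | ∀ i, f i ∈ Y i} ⊆ Z := by
  intro d
  induction d with
  | zero =>
    intro X t U Z hZ 𝒰 h𝒰
    obtain ⟨z, hz⟩ := hZ
    refine ⟨fun i => i.elim0, fun i => i.elim0, fun i => i.elim0, ?_⟩
    intro f _
    have : f = z := funext fun i => i.elim0
    rwa [this]
  | succ d ih =>
    intro X t U Z hZ 𝒰 h𝒰
    obtain ⟨hsub, hproj, hfib⟩ := hZ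
    obtain ⟨Y', hfin, hmeet, hprod⟩ := ih (fun i => X i.castSucc) (fun i => t i.castSucc)
      (fun i => U i.castSucc) (Fin.init '' Z) hproj (fun i => 𝒰 i.castSucc)
      (fun i => h𝒰 i.castSucc)
    have hS : (Set.univ.pi Y').Finite := Set.Finite.pi hfin
    let F : Finset _ := hS.toFinset
    have hF : ↑F ⊆ Fin.init '' Z := by
      intro x hx
      rw [show F = hS.toFinset from rfl, Set.Finite.coe_toFinset] at hx
      exact hprod (fun i => hx i (Set.mem_univ i))
    have hdense := hfib F hF
    letI : TopologicalSpace (X (Fin.last d)) := t (Fin.last d)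
    have hpick : ∀ V ∈ 𝒰 (Fin.last d), ∃ y,
        y ∈ {y | ∀ x ∈ F, Fin.snoc x y ∈ Z} ∩ V := by
      intro V hV
      obtain ⟨hVopen, ⟨v, hv⟩, hVsub⟩ := h𝒰 (Fin.last d) V hV
      have hvmem : v ∈ closure {y | ∀ x ∈ F, Fin.snoc x y ∈ Z} := hdense (hVsub hv)
      obtain ⟨y, hy1, hy2⟩ := (mem_closure_iff.mp hvmem) V hVopen hv
      exact ⟨y, hy2, hy1⟩
    let p : {V // V ∈ 𝒰 (Fin.last d)} → X (Fin.last d) := fun V => (hpick V.1 V.2).choose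
    have hp : ∀ V : {V // V ∈ 𝒰 (Fin.last d)},
        p V ∈ {y | ∀ x ∈ F, Fin.snoc x y ∈ Z} ∩ V.1 :=
      fun V => (hpick V.1 V.2).choose_spec
    let Ylast : Set (X (Fin.last d)) := Set.range p
    refine ⟨fun i => Fin.lastCases Ylast Y' i, ?_, ?_, ?_⟩
    · intro i
      induction i using Fin.lastCases with
      | last => simpa using Set.finite_range p
      | cast j => simpa using hfin j
    · intro i V hV
      induction i using Fin.lastCases with
      | last =>
        refine ⟨p ⟨V, hV⟩, ?_, (hp ⟨V, hV⟩).2⟩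
        simp only [Fin.lastCases_last]
        exact Set.mem_range_self _
      | cast j =>
        obtain ⟨y, hy1, hy2⟩ := hmeet j V hV
        exact ⟨y, by simpa using hy1, hy2⟩
    · intro f hf
      have hx : Fin.init f ∈ F := by
        simp only [F, Set.Finite.mem_toFinset, Set.mem_pi, Set.mem_univ, true_imp_iff]
        intro j
        have := hf j.castSucc
        simpa [Fin.init] using this
      have hy := hf (Fin.last d)
      simp only [Fin.lastCases_last] at hy
      obtain ⟨V, hV⟩ := hy
      have := (hp V).1 (Fin.init f) hx
      rw [hV] at this
      rwa [Fin.snoc_init_self] at this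

/-- Every DDF set is a finitary somewhere dense grid: if `Z` is DDF with respect to
nonempty open sets `U i`, then for every tuple of finite collections `𝒰 i` of
nonempty open subsets of `U i` there are sets `Y i ⊆ X i` such that each `Y i` meets
every member of `𝒰 i` and `∏ Y i ⊆ Z`. -/
theorem stmt7 (d : ℕ) (hd : 1 ≤ d) (X : Fin d → Type) [t : ∀ i, TopologicalSpace (X i)]
    (hPolish : ∀ i, PolishSpace (X i)) (hperf : ∀ i, Perfect (Set.univ : Set (X i)))
    (U : ∀ i, Set (X i)) (hUopen : ∀ i, IsOpen (U i)) (hUne : ∀ i, (U i).Nonempty)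
    (Z : Set (∀ i, X i)) (hZ : IsDDF d X (fun i => inferInstance) U Z)
    (𝒰 : ∀ i, Finset (Set (X i)))
    (h𝒰 : ∀ i, ∀ V ∈ 𝒰 i, IsOpen V ∧ V.Nonempty ∧ V ⊆ U i) :
    ∃ Y : ∀ i, Set (X i),
      (∀ i, ∀ V ∈ 𝒰 i, (Y i ∩ V).Nonempty) ∧
      {f : ∀ i, X i | ∀ i, f i ∈ Y i} ⊆ Z := by
  obtain ⟨Y, _, hmeet, hsub⟩ :=
    ddf_aux d X (fun i => inferInstance) U Z hZ 𝒰 h𝒰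
  exact ⟨Y, hmeet, hsub⟩
end

section
/- Let $d \geq 1$ and let $Z \subseteq \prod_{i<d} X_i$ be a DDF subset of a product of perfect Polish spaces (with witnessing open sets $U_i$). Then for every $k < \omega$, there exist finite sets $A_i \subseteq X_i$ with $|A_i| = k$ for each $i < d$ and $\prod_{i<d} A_i \subseteq Z$. -/
/-!
Induct on `d`. Given a grid `∏_{i<d} A i` of side `k` inside the projection of `Z`, the grid is
finite, so the DDF condition makes the intersection of its fibers dense in the open set `U d`,
which is nonempty because DDF sets are. In a perfect T1 space such a set is infinite, so it
contains `k` points, which form the last side of the grid.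
-/

open Set

lemma infinite_inter_of_subset_closure {X : Type*} [TopologicalSpace X] [T1Space X]
    [PerfectSpace X] {U D : Set X} (hU : IsOpen U) (hUne : U.Nonempty)
    (hD : U ⊆ closure D) : (D ∩ U).Infinite := by
  intro hfin
  obtain ⟨x, hx⟩ := hUne
  have hrest : (U \ (D ∩ U)).Nonempty :=
    ((infinite_of_mem_nhds x (hU.mem_nhds hx)).sdiff hfin).nonempty
  obtain ⟨y, hyU, hyD⟩ := hrest
  obtain ⟨z, ⟨hzU, hzNotDU⟩, hzD⟩ :=
    mem_closure_iff.mp (hD hyU) _ (hU.sdiff hfin.isClosed) ⟨hyU, hyD⟩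
  exact hzNotDU ⟨hzD, hzU⟩

lemma IsDDF.nonempty : ∀ {d : ℕ} {X : Fin d → Type} {t : ∀ i, TopologicalSpace (X i)}
    {U : ∀ i, Set (X i)} {Z : Set (∀ i, X i)}, IsDDF d X t U Z → Z.Nonempty
  | 0, _, _, _, _, hZ => hZ
  | _ + 1, _, _, _, _, hZ => (IsDDF.nonempty hZ.2.1).of_image

theorem IsDDF.exists_grid_subset {d : ℕ} {X : Fin d → Type} [t : ∀ i, TopologicalSpace (X i)]
    [∀ i, T1Space (X i)] [∀ i, PerfectSpace (X i)] {U : ∀ i, Set (X i)}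
    (hU : ∀ i, IsOpen (U i)) {Z : Set (∀ i, X i)} (hZ : IsDDF d X t U Z) (k : ℕ) :
    ∃ A : ∀ i, Finset (X i), (∀ i, (A i).card = k) ∧ {f : ∀ i, X i | ∀ i, f i ∈ A i} ⊆ Z := by
  classical
  induction d with
  | zero =>
    obtain ⟨z, hz⟩ := hZ.nonempty
    exact ⟨fun i => i.elim0, fun i => i.elim0, fun f _ => Subsingleton.elim z f ▸ hz⟩
  | succ d ih =>
    obtain ⟨z, hz⟩ := hZ.nonempty
    obtain ⟨hZU, hinit, hfib⟩ := hZ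
    obtain ⟨A, hAcard, hAZ⟩ := ih (fun i => hU i.castSucc) hinit
    let F := Fintype.piFinset A
    have hFZ : (F : Set (∀ i : Fin d, X i.castSucc)) ⊆ Fin.init '' Z := fun x hx =>
      hAZ (Fintype.mem_piFinset.mp hx)
    obtain ⟨B, hBD, hBcard⟩ :=
      (infinite_inter_of_subset_closure (hU _) ⟨_, hZU hz _⟩ (hfib F hFZ)).exists_subset_card_eq k
    refine ⟨Fin.snoc A B, Fin.lastCases (by simpa using hBcard) (by simpa using hAcard), ?_⟩
    intro f hf
    have hfinit : Fin.init f ∈ F := Fintype.mem_piFinset.mpr fun i => by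
      simpa [Fin.init] using hf i.castSucc
    have hflast : f (Fin.last d) ∈ B := by simpa using hf (Fin.last d)
    simpa using (hBD hflast).1 _ hfinit

theorem stmt8_general (d : ℕ) (X : Fin d → Type) [t : ∀ i, TopologicalSpace (X i)]
    (hPolish : ∀ i, PolishSpace (X i)) (hperf : ∀ i, Perfect (Set.univ : Set (X i)))
    (U : ∀ i, Set (X i)) (hUopen : ∀ i, IsOpen (U i))
    (Z : Set (∀ i, X i)) (hZ : IsDDF d X (fun i => inferInstance) U Z) (k : ℕ) :
    ∃ A : ∀ i, Finset (X i),
      (∀ i, (A i).card = k) ∧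
      {f : ∀ i, X i | ∀ i, f i ∈ A i} ⊆ Z := by
  have : ∀ i, PerfectSpace (X i) := fun i => ⟨(hperf i).acc⟩
  exact hZ.exists_grid_subset hUopen k

/-- A DDF set contains arbitrarily large finite grids: if `Z` is DDF with respect to
nonempty open sets `U i`, then for every `k` there are finite sets `A i ⊆ X i` of
cardinality `k` with `∏ A i ⊆ Z`. -/
theorem stmt8 (d : ℕ) (hd : 1 ≤ d) (X : Fin d → Type) [t : ∀ i, TopologicalSpace (X i)]
    (hPolish : ∀ i, PolishSpace (X i)) (hperf : ∀ i, Perfect (Set.univ : Set (X i)))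
    (U : ∀ i, Set (X i)) (hUopen : ∀ i, IsOpen (U i)) (hUne : ∀ i, (U i).Nonempty)
    (Z : Set (∀ i, X i)) (hZ : IsDDF d X (fun i => inferInstance) U Z) (k : ℕ) :
    ∃ A : ∀ i, Finset (X i),
      (∀ i, (A i).card = k) ∧
      {f : ∀ i, X i | ∀ i, f i ∈ A i} ⊆ Z :=
  stmt8_general d X (t := t) hPolish hperf U hUopen Z hZ k
end

section
/- Suppose $2 \leq d < \omega$ and $2^{\aleph_0} \leq \aleph_{d-1}$. Then for every sequence $X_0, \ldots, X_{d-1}$ of perfect Polish spaces there is a coloring $c : \prod_{i<d} X_i \to \omega$ such that for every somewhere-DDF set $Y \subseteq \prod_{i<d} X_i$, the image $c[Y]$ is infinite. -/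
open Function

section CountableSections

variable {ι : Type*} [DecidableEq ι] {X : ι → Type*}

/-- The selector `m` stands for Kuratowski's partition of the product into the pieces
`m ⁻¹' {i}`: each piece meets every line parallel to its own axis in a countable set. -/
def HasCountableSections (m : (∀ i, X i) → ι) : Prop :=
  ∀ i (f : ∀ j, X j), {a : X i | m (update f i a) = i}.Countable

theorem HasCountableSections.countable_sep_comp {Y : ι → Type*} {m : (∀ i, Y i) → ι}
    (hm : HasCountableSections m) {e : ∀ i, X i → Y i} {S : ∀ i, Set (X i)}
    (he : ∀ i, Set.InjOn (e i) (S i)) (i : ι) (f : ∀ j, X j) :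
    {a ∈ S i | m (fun j => e j (update f i a j)) = i}.Countable := by
  refine Set.MapsTo.countable_of_injOn (fun a ha => ?_) ((he i).mono fun a ha => ha.1)
    (hm i fun j => e j (f j))
  have hcomp : (fun j => e j (update f i a j)) = update (fun j => e j (f j)) i (e i a) :=
    funext (apply_update e f i a)
  show m _ = i
  rw [← hcomp]
  exact ha.2

theorem HasCountableSections.comp_injective {Y : ι → Type*} {m : (∀ i, Y i) → ι}
    (hm : HasCountableSections m) {e : ∀ i, X i → Y i} (he : ∀ i, Injective (e i)) :
    HasCountableSections fun p : ∀ i, X i => m fun j => e j (p j) := fun i f => by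
  simpa using hm.countable_sep_comp (S := fun _ => Set.univ) (fun i => (he i).injOn) i f

end CountableSections

section LexTop

variable {α : Type*} [LinearOrder α] {k : ℕ}

def lexTop (p : Fin (k + 1) → α) : α × Fin (k + 1) :=
  ofLex (Finset.univ.sup' Finset.univ_nonempty fun j => toLex (p j, j))

theorem toLex_le_toLex_lexTop (p : Fin (k + 1) → α) (j : Fin (k + 1)) :
    toLex (p j, j) ≤ toLex (lexTop p) :=
  Finset.le_sup' (fun j => toLex (p j, j)) (Finset.mem_univ j)

theorem lexTop_eq (p : Fin (k + 1) → α) : lexTop p = (p (lexTop p).2, (lexTop p).2) := by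
  obtain ⟨j, -, hj⟩ := Finset.exists_mem_eq_sup' Finset.univ_nonempty fun j => toLex (p j, j)
  have : lexTop p = (p j, j) := congrArg ofLex hj
  rw [this]

theorem le_lexTop_fst (p : Fin (k + 1) → α) (j : Fin (k + 1)) : p j ≤ (lexTop p).1 :=
  Prod.Lex.monotone_fst _ _ (toLex_le_toLex_lexTop p j)

theorem lexTop_eq_of_eqOn_ne {p q : Fin (k + 1) → α} {i : Fin (k + 1)}
    (h : ∀ j ≠ i, p j = q j) (hp : (lexTop p).2 ≠ i) (hq : (lexTop q).2 ≠ i) :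
    lexTop p = lexTop q := by
  have key : ∀ {p q : Fin (k + 1) → α}, (∀ j ≠ i, p j = q j) → (lexTop p).2 ≠ i →
      toLex (lexTop p) ≤ toLex (lexTop q) := fun h hp => by
    rw [lexTop_eq, h _ hp]
    exact toLex_le_toLex_lexTop _ _
  exact toLex.injective (le_antisymm (key h hp) (key (fun j hj => (h j hj).symm) hq))

end LexTop

/-- The inductive step of Kuratowski's theorem: a point goes to the piece that the lower
dimensional partition assigns to its remaining coordinates, which all lie below its largest one.
Ties are broken by position, so that along a line parallel to the `i`-th axis all points of the
`i`-th piece have the same largest coordinate, at the same position. -/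
theorem HasCountableSections.lexTop_succAbove {α β : Type*} [LinearOrder α] {k : ℕ}
    {m : (Fin (k + 1) → β) → Fin (k + 1)} (hm : HasCountableSections m)
    {e : α → α → β} (he : ∀ b, Set.InjOn (e b) (Set.Iic b)) :
    HasCountableSections fun p : Fin (k + 2) → α =>
      (lexTop p).2.succAbove (m fun j => e (lexTop p).1 ((lexTop p).2.removeNth p j)) := by
  intro i f
  set L := {a | (lexTop (update f i a)).2.succAbove
    (m fun j => e (lexTop (update f i a)).1 ((lexTop (update f i a)).2.removeNth (update f i a) j))
      = i}
  rcases L.eq_empty_or_nonempty with hL | ⟨a₀, ha₀⟩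
  · rw [hL]
    exact Set.countable_empty
  have top_ne : ∀ a ∈ L, (lexTop (update f i a)).2 ≠ i := fun a ha h =>
    Fin.succAbove_ne _ _ (ha.trans h.symm)
  have top_eq : ∀ a ∈ L, lexTop (update f i a) = lexTop (update f i a₀) := fun a ha =>
    lexTop_eq_of_eqOn_ne (fun j hj => by simp only [update_of_ne hj]) (top_ne a ha)
      (top_ne a₀ ha₀)
  set t := lexTop (update f i a₀)
  obtain ⟨j', hj'⟩ : ∃ j', t.2.succAbove j' = i := Fin.exists_succAbove_eq (top_ne a₀ ha₀).symm
  refine (hm.countable_sep_comp (S := fun _ => Set.Iic t.1) (fun _ => he t.1) j'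
    (t.2.removeNth f)).mono fun a ha => Set.mem_sep ?_ ?_
  · simpa [top_eq a ha] using le_lexTop_fst (update f i a) i
  · have hline := ha
    rw [Set.mem_ofPred_eq, top_eq a ha, ← hj', Fin.removeNth_update_succAbove] at hline
    exact Fin.succAbove_right_injective hline

universe u

section Kuratowski

open Cardinal

theorem exists_injOn_Iic_toType_ord_aleph_succ (n : ℕ)
    (b : (ℵ_ (n + 1 : ℕ) : Cardinal.{u}).ord.ToType) :
    ∃ e : _ → (ℵ_ n : Cardinal.{u}).ord.ToType, Set.InjOn e (Set.Iic b) := by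
  have hlt : #(Set.Iic b) < Order.succ (ℵ_ n) := by
    have h := mk_Iic_lt b (by rw [mk_ord_toType, Ordinal.type_toType]) (by simp)
    rw [mk_ord_toType] at h
    exact h.trans_eq (by rw [succ_aleph, Nat.cast_succ])
  obtain ⟨e⟩ := (le_def _ _).1 ((Order.lt_succ_iff.1 hlt).trans (mk_ord_toType _).ge)
  have : Nonempty (ℵ_ n : Cardinal.{u}).ord.ToType :=
    mk_ne_zero_iff.1 (by simp [(aleph_pos _).ne'])
  exact Set.exists_injOn_iff_injective.2 ⟨e, e.injective⟩

theorem exists_hasCountableSections_aleph (n : ℕ) :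
    ∃ m : (Fin (n + 1) → (ℵ_ n : Cardinal.{u}).ord.ToType) → Fin (n + 1),
      HasCountableSections m := by
  induction n with
  | zero =>
    have : Countable (ℵ_ (0 : ℕ) : Cardinal.{u}).ord.ToType := by simp [← mk_le_aleph0_iff]
    exact ⟨fun _ => 0, fun i f => Set.to_countable _⟩
  | succ n ih =>
    obtain ⟨m, hm⟩ := ih
    choose e he using exists_injOn_Iic_toType_ord_aleph_succ n
    exact ⟨_, hm.lexTop_succAbove he⟩

theorem exists_hasCountableSections_of_mk_le_aleph {n : ℕ} {X : Fin (n + 1) → Type u}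
    (hX : ∀ i, #(X i) ≤ ℵ_ n) : ∃ m : (∀ i, X i) → Fin (n + 1), HasCountableSections m := by
  obtain ⟨m, hm⟩ := exists_hasCountableSections_aleph.{u} n
  have e : ∀ i, X i ↪ (ℵ_ n : Cardinal.{u}).ord.ToType := fun i =>
    Classical.choice ((le_def _ _).1 ((hX i).trans (mk_ord_toType _).ge))
  exact ⟨_, hm.comp_injective fun i => (e i).injective⟩

end Kuratowski

section Coloring

variable {n : ℕ} {X : Fin (n + 1) → Type*} {m : (∀ i, X i) → Fin (n + 1)}

theorem HasCountableSections.countable_insertNth (hm : HasCountableSections m)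
    (i : Fin (n + 1)) (g : ∀ j, X (i.succAbove j)) :
    {a | m (i.insertNth a g) = i}.Countable := by
  rcases Set.eq_empty_or_nonempty {a | m (i.insertNth a g) = i} with h | ⟨a₀, -⟩
  · rw [h]
    exact Set.countable_empty
  · simpa only [Fin.update_insertNth] using hm i (i.insertNth a₀ g)

theorem HasCountableSections.exists_injOn_insertNth (hm : HasCountableSections m) :
    ∃ c : (∀ i, X i) → ℕ, ∀ i g,
      Set.InjOn (fun a => c (i.insertNth a g)) {a | m (i.insertNth a g) = i} := by
  choose enc henc using fun i g =>
    Set.countable_iff_exists_injOn.1 (hm.countable_insertNth i g)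
  let code (i : Fin (n + 1)) (p : ∀ j, X j) : ℕ := enc i (i.removeNth p) (p i)
  refine ⟨fun p => Nat.pair (m p) (code (m p) p), fun i g a (ha : _ = i) b (hb : _ = i) hab => ?_⟩
  simp only [ha, hb, Nat.pair_eq_pair, true_and, code, Fin.removeNth_insertNth,
    Fin.insertNth_apply_same] at hab
  exact henc i g ha hb hab

end Coloring

section Grid

open Finset Fintype

variable {n k K : ℕ} {X : Fin (n + 1) → Type*} (C : ∀ i, Finset (X i))
  (m : (∀ i, X i) → Fin (n + 1))

theorem card_filter_piFinset_eq_le (hC : ∀ i, #(C i) = K) (i : Fin (n + 1))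
    (h : ∀ g ∈ piFinset (i.removeNth C), #{a ∈ C i | m (i.insertNth a g) = i} ≤ k) :
    #{p ∈ piFinset C | m p = i} ≤ k * K ^ n := by
  classical
  calc #{p ∈ piFinset C | m p = i}
      ≤ k * #(image i.removeNth {p ∈ piFinset C | m p = i}) := by
        refine card_le_mul_card_image _ _ fun g hg => ?_
        obtain ⟨p, hp, rfl⟩ := mem_image.1 hg
        refine (card_le_card_of_injOn (· i) (fun q hq => ?_) (fun q hq q' hq' hqq' => ?_)).trans
          (h _ ((Fin.mem_piFinset_iff_pivot_removeNth i).1 (mem_filter.1 hp).1).2)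
        · simp only [coe_filter, Set.mem_ofPred_eq, mem_filter] at hq ⊢
          rw [← hq.2, Fin.insertNth_self_removeNth]
          exact ⟨((Fin.mem_piFinset_iff_pivot_removeNth i).1 hq.1.1).1, hq.1.2⟩
        · simp only [coe_filter, Set.mem_ofPred_eq, mem_filter] at hq hq'
          rw [← Fin.insertNth_self_removeNth i q, ← Fin.insertNth_self_removeNth i q', hq.2, hq'.2]
          exact congrArg (i.insertNth · _) hqq'
    _ ≤ k * #(piFinset (i.removeNth C)) := by
        gcongr
        intro g hg
        obtain ⟨p, hp, rfl⟩ := mem_image.1 hg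
        exact ((Fin.mem_piFinset_iff_pivot_removeNth i).1 (mem_filter.1 hp).1).2
    _ = k * K ^ n := by simp [card_piFinset, Fin.removeNth, hC]

theorem exists_lt_card_filter_insertNth (hC : ∀ i, #(C i) = K) (hK : (n + 1) * k < K) :
    ∃ i, ∃ g ∈ piFinset (i.removeNth C), k < #{a ∈ C i | m (i.insertNth a g) = i} := by
  by_contra! h
  have hcount : K ^ (n + 1) ≤ (n + 1) * (k * K ^ n) := calc
    K ^ (n + 1) = #(piFinset C) := by simp [card_piFinset, hC]
    _ = ∑ i, #{p ∈ piFinset C | m p = i} := card_eq_sum_card_fiberwise fun _ _ => mem_univ _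
    _ ≤ ∑ _i : Fin (n + 1), k * K ^ n :=
        sum_le_sum fun i _ => card_filter_piFinset_eq_le C m hC i (h i)
    _ = (n + 1) * (k * K ^ n) := by simp
  have hpos : 0 < K ^ n := pow_pos (by omega) n
  rw [pow_succ, ← mul_assoc, mul_comm (K ^ n)] at hcount
  exact absurd (Nat.le_of_mul_le_mul_right hcount hpos) (not_le.2 hK)

end Grid

section DDF

open Finset Fintype

theorem IsOpen.infinite_of_subset_closure {Y : Type*} [TopologicalSpace Y] [T1Space Y]
    [PerfectSpace Y] {U S : Set Y} (hU : IsOpen U) (hne : U.Nonempty) (hS : U ⊆ closure S) :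
    S.Infinite := fun hfin => by
  obtain ⟨x, hx⟩ := hne
  exact infinite_of_mem_nhds x (hU.mem_nhds hx) (hfin.subset (hfin.isClosed.closure_eq ▸ hS))

theorem IsDDF.exists_piFinset_subset : ∀ {d : ℕ} {X : Fin d → Type}
    [t : ∀ i, TopologicalSpace (X i)] [∀ i, T1Space (X i)] [∀ i, PerfectSpace (X i)]
    {U : ∀ i, Set (X i)} {Z : Set (∀ i, X i)}, IsDDF d X t U Z →
    (∀ i, IsOpen (U i)) → (∀ i, (U i).Nonempty) →
    ∀ K : ℕ, ∃ C : ∀ i, Finset (X i), (∀ i, #(C i) = K) ∧ ↑(piFinset C) ⊆ Z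
  | 0, _, _, _, _, _, _, ⟨z, hz⟩, _, _, _ =>
    ⟨fun i => i.elim0, fun i => i.elim0, fun p _ => by rwa [Subsingleton.elim p z]⟩
  | d + 1, X, t, _, _, U, Z, ⟨_, hinit, hfiber⟩, hU, hne, K => by
    obtain ⟨C, hC, hCZ⟩ := IsDDF.exists_piFinset_subset (X := fun i => X i.castSucc)
      (t := fun i => t i.castSucc) hinit (fun i => hU _) (fun i => hne _) K
    obtain ⟨T, hTS, hT⟩ := ((hU (Fin.last d)).infinite_of_subset_closure (hne _)
      (hfiber _ hCZ)).exists_subset_card_eq K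
    refine ⟨Fin.snoc C T, fun i => ?_, fun p hp => ?_⟩
    · induction i using Fin.lastCases <;> simp [hT, hC]
    · rw [mem_coe, Fin.mem_piFinset_iff_last_init, Fin.snoc_last, Fin.init_snoc] at hp
      simpa using hTS hp.1 _ hp.2

variable {n : ℕ} {X : Fin (n + 1) → Type} [t : ∀ i, TopologicalSpace (X i)]
  [∀ i, T1Space (X i)] [∀ i, PerfectSpace (X i)] {U : ∀ i, Set (X i)} {Z : Set (∀ i, X i)}

theorem IsDDF.exists_selected_line (hZ : IsDDF (n + 1) X t U Z) (hU : ∀ i, IsOpen (U i))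
    (hne : ∀ i, (U i).Nonempty) (m : (∀ i, X i) → Fin (n + 1)) (k : ℕ) :
    ∃ i g, ∃ T : Finset (X i), #T = k ∧
      ∀ a ∈ T, i.insertNth a g ∈ Z ∧ m (i.insertNth a g) = i := by
  obtain ⟨C, hC, hCZ⟩ := hZ.exists_piFinset_subset hU hne ((n + 1) * k + 1)
  obtain ⟨i, g, hg, hk⟩ := exists_lt_card_filter_insertNth C m hC (Nat.lt_succ_self _)
  obtain ⟨T, hTC, hT⟩ := exists_subset_card_eq hk.le
  refine ⟨i, g, T, hT, fun a ha => ?_⟩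
  obtain ⟨haC, hma⟩ := mem_filter.1 (hTC ha)
  refine ⟨hCZ ?_, hma⟩
  rw [mem_coe, Fin.mem_piFinset_iff_pivot_removeNth i, Fin.insertNth_apply_same,
    Fin.removeNth_insertNth]
  exact ⟨haC, hg⟩

theorem IsDDF.infinite_image (hZ : IsDDF (n + 1) X t U Z) (hU : ∀ i, IsOpen (U i))
    (hne : ∀ i, (U i).Nonempty) {m : (∀ i, X i) → Fin (n + 1)} {c : (∀ i, X i) → ℕ}
    (hc : ∀ i g, Set.InjOn (fun a => c (i.insertNth a g)) {a | m (i.insertNth a g) = i}) :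
    (c '' Z).Infinite := fun hfin => by
  obtain ⟨i, g, T, hT, hTZ⟩ := hZ.exists_selected_line hU hne m (#hfin.toFinset + 1)
  have hsub : T.image (fun a => c (i.insertNth a g)) ⊆ hfin.toFinset := fun y hy => by
    obtain ⟨a, ha, rfl⟩ := mem_image.1 hy
    exact hfin.mem_toFinset.2 ⟨_, (hTZ a ha).1, rfl⟩
  have hcard := card_le_card hsub
  rw [card_image_of_injOn fun a ha b hb => hc i g (hTZ a ha).2 (hTZ b hb).2, hT] at hcard
  omega

end DDF

theorem PolishSpace.mk_le_continuum (Y : Type*) [TopologicalSpace Y]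
    [PolishSpace Y] : Cardinal.mk Y ≤ Cardinal.continuum := by
  borelize Y
  simpa [Cardinal.mk_real] using Cardinal.lift_mk_le_lift_mk_of_injective
    (MeasureTheory.measurableEmbedding_embeddingReal Y).injective

theorem stmt9_general (d : ℕ) (hd : 2 ≤ d)
    (hc : Cardinal.continuum ≤ Cardinal.aleph (d - 1))
    (X : Fin d → Type) [t : ∀ i, TopologicalSpace (X i)]
    (hPolish : ∀ i, PolishSpace (X i)) (hperf : ∀ i, Perfect (Set.univ : Set (X i))) :
    ∃ c : (∀ i, X i) → ℕ,
      ∀ Y : Set (∀ i, X i), SomewhereDDF d X (fun i => inferInstance) Y →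
        (c '' Y).Infinite := by
  obtain ⟨n, rfl⟩ : ∃ n, d = n + 1 := ⟨d - 1, by omega⟩
  rw [← Nat.cast_one (R := Ordinal), ← Ordinal.natCast_sub, Nat.add_sub_cancel] at hc
  have hX (i : Fin (n + 1)) : Cardinal.mk (X i) ≤ Cardinal.aleph n :=
    (PolishSpace.mk_le_continuum (X i)).trans
      (Cardinal.lift_le.1 (by simpa using hc))
  have (i : Fin (n + 1)) : PerfectSpace (X i) := ⟨(hperf i).2⟩
  obtain ⟨m, hm⟩ := exists_hasCountableSections_of_mk_le_aleph hX
  obtain ⟨c, hc⟩ := hm.exists_injOn_insertNth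
  exact ⟨c, fun Y ⟨U, hU, hne, hY⟩ => hY.infinite_image hU hne hc⟩

/-- If `2 ≤ d` and `2^{ℵ₀} ≤ ℵ_{d-1}`, then for every sequence of `d` perfect Polish
spaces there is a coloring `c : ∏ X i → ω` such that every somewhere-DDF set receives
infinitely many colors (the DDF collection is not weakly ω-partition subregular). -/
theorem stmt9 (d : ℕ) (hd : 2 ≤ d)
    (hc : Cardinal.continuum ≤ Cardinal.aleph (d - 1))
    (X : Fin d → Type) [t : ∀ i, TopologicalSpace (X i)]
    (hPolish : ∀ i, PolishSpace (X i)) (hperf : ∀ i, Perfect (Set.univ : Set (X i)))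
    (hne : ∀ i, Nonempty (X i)) :
    ∃ c : (∀ i, X i) → ℕ,
      ∀ Y : Set (∀ i, X i), SomewhereDDF d X (fun i => inferInstance) Y →
        (c '' Y).Infinite :=
  stmt9_general d hd hc X (t := t) hPolish hperf
end

section
/- Suppose $d \geq 2$ and there exists a coloring $c : \prod_{i<d} X_i \to \omega$ such that every somewhere-DDF subset of $\prod_{i<d} X_i$ receives infinitely many colors (i.e., the DDF collection on $\vec X = \langle X_0,\ldots,X_{d-1}\rangle$ is not weakly $\omega$-partition subregular). Then for any further perfect Polish space $X_d$, there exists a 2-coloring of $\prod_{i \leq d} X_i$ with no monochromatic somewhere-DDF subset. -/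
/-!
Colour `f` by whether its last coordinate lies in `S (c (Fin.init f))`, where the open sets
`S n` are chosen so that every nonempty open set eventually meets both `S n` and the interior
of its complement. If `Y` is DDF in `∏ U i`, its projection receives infinitely many colours
under `c`, so it contains a point `x` whose colour `n` is large enough for `U (last d)` to meet
both sides of `S n`. The fibre of `Y` over `x` is dense in `U (last d)`, hence meets both sides,
and `Y` is not monochromatic.
-/

open Set Filter Topology

section Splitting

variable {X : Type*} [TopologicalSpace X]

lemma Preperfect.infinite_of_isOpen [T1Space X] (hX : Preperfect (univ : Set X)) {V : Set X}
    (hV : IsOpen V) (hVne : V.Nonempty) : V.Infinite := by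
  obtain ⟨x, hx⟩ := hVne
  have : NeBot (𝓝[≠] x) := by simpa [AccPt] using hX x (mem_univ x)
  exact infinite_of_mem_nhds x (hV.mem_nhds hx)

lemma exists_isOpen_split_of_finite [T2Space X] (hX : Preperfect (univ : Set X))
    {F : Set (Set X)} (hF : F.Finite) (hFo : ∀ V ∈ F, IsOpen V ∧ V.Nonempty) :
    ∃ S : Set X, IsOpen S ∧ ∀ V ∈ F, (V ∩ S).Nonempty ∧ (V ∩ interior Sᶜ).Nonempty := by
  have := hF.to_subtype
  choose a ha using fun V : F => (hFo V V.2).2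
  choose b hb using fun V : F =>
    ((hX.infinite_of_isOpen (hFo V V.2).1 (hFo V V.2).2).sdiff (finite_range a)).nonempty
  have hab : Disjoint (range a) (range b) := by
    rw [disjoint_right]
    rintro _ ⟨V, rfl⟩
    exact (hb V).2
  obtain ⟨S, T, hS, hT, haS, hbT, hST⟩ :=
    SeparatedNhds.of_isCompact_isCompact (finite_range a).isCompact
      (finite_range b).isCompact hab
  have hTS : T ⊆ interior Sᶜ :=
    interior_maximal (fun _ hy hyS => hST.ne_of_mem hyS hy rfl) hT
  refine ⟨S, hS, fun V hV => ⟨⟨a ⟨V, hV⟩, ha ⟨V, hV⟩, haS (mem_range_self _)⟩,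
    ⟨b ⟨V, hV⟩, (hb ⟨V, hV⟩).1, hTS (hbT (mem_range_self _))⟩⟩⟩

lemma exists_seq_isOpen_eventually_split [T2Space X] [SecondCountableTopology X]
    (hX : Preperfect (univ : Set X)) :
    ∃ S : ℕ → Set X, (∀ n, IsOpen (S n)) ∧ ∀ U : Set X, IsOpen U → U.Nonempty →
      ∀ᶠ n in atTop, (U ∩ S n).Nonempty ∧ (U ∩ interior (S n)ᶜ).Nonempty := by
  obtain ⟨b, hbc, hbempty, hb⟩ := TopologicalSpace.exists_countable_basis X
  obtain ⟨B, hbB⟩ := countable_iff_exists_subset_range.mp hbc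
  have hsplit (n : ℕ) := exists_isOpen_split_of_finite hX (F := B '' Iic n ∩ b)
    ((finite_Iic n).image B |>.inter_of_left b)
    fun V hV => ⟨hb.isOpen hV.2, nonempty_iff_ne_empty.mpr (ne_of_mem_of_not_mem hV.2 hbempty)⟩
  choose S hSo hS using hsplit
  refine ⟨S, hSo, fun U hU ⟨x, hx⟩ => ?_⟩
  obtain ⟨V, hVb, -, hVU⟩ := hb.exists_subset_of_mem_open hx hU
  obtain ⟨k, rfl⟩ := hbB hVb
  filter_upwards [eventually_ge_atTop k] with n hn
  obtain ⟨h₁, h₂⟩ := hS n (B k) ⟨mem_image_of_mem B hn, hVb⟩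
  exact ⟨h₁.mono (inter_subset_inter_left _ hVU), h₂.mono (inter_subset_inter_left _ hVU)⟩

end Splitting

section DDF

variable {d : ℕ} {X : Fin (d + 1) → Type} [t : ∀ i, TopologicalSpace (X i)]

lemma SomewhereDDF.init {Z : Set (∀ i, X i)} (hZ : SomewhereDDF (d + 1) X t Z) :
    SomewhereDDF d (fun i => X i.castSucc) (fun i => t i.castSucc) (Fin.init '' Z) :=
  let ⟨U, hUo, hUne, _, hinit, _⟩ := hZ
  ⟨fun i => U i.castSucc, fun i => hUo i.castSucc, fun i => hUne i.castSucc, hinit⟩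

lemma IsDDF.exists_snoc_mem {U : ∀ i, Set (X i)} {Z : Set (∀ i, X i)}
    (hZ : IsDDF (d + 1) X t U Z) {x : ∀ i : Fin d, X i.castSucc} (hx : x ∈ Fin.init '' Z)
    {W : Set (X (Fin.last d))} (hW : IsOpen W) (hUW : (U (Fin.last d) ∩ W).Nonempty) :
    ∃ y ∈ W, Fin.snoc x y ∈ Z := by
  have hdense := hZ.2.2 {x} (by simpa using hx)
  obtain ⟨y, hy, hyW⟩ := (closure_inter_open_nonempty_iff hW).mp (hUW.mono
    (inter_subset_inter_left W hdense))
  exact ⟨y, hyW, hy x (Finset.mem_singleton_self x)⟩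

end DDF

theorem stmt10_general (d : ℕ)
    (X : Fin (d + 1) → Type) [t : ∀ i, TopologicalSpace (X i)]
    (hPolish : ∀ i, PolishSpace (X i)) (hperf : ∀ i, Perfect (Set.univ : Set (X i)))
    (h : ∃ c : (∀ i : Fin d, X i.castSucc) → ℕ,
      ∀ Y : Set (∀ i : Fin d, X i.castSucc),
        SomewhereDDF d (fun i => X i.castSucc) (fun i => inferInstance) Y →
        (c '' Y).Infinite) :
    ∃ γ : (∀ i, X i) → Fin 2,
      ∀ (j : Fin 2) (Y : Set (∀ i, X i)),
        SomewhereDDF (d + 1) X (fun i => inferInstance) Y →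
        ¬ Y ⊆ γ ⁻¹' {j} := by
  classical
  obtain ⟨c, hc⟩ := h
  have := hPolish (Fin.last d)
  obtain ⟨S, hSo, hS⟩ := exists_seq_isOpen_eventually_split (hperf (Fin.last d)).acc
  refine ⟨fun f => if f (Fin.last d) ∈ S (c (Fin.init f)) then 1 else 0, ?_⟩
  rintro j Y hY hmono
  have hcY := hc _ hY.init
  obtain ⟨U, hUo, hUne, hYU⟩ := hY
  obtain ⟨N, hN⟩ := eventually_atTop.mp
    (hS _ (hUo (Fin.last d)) (hUne (Fin.last d)))
  obtain ⟨_, ⟨x, hx, rfl⟩, hNx⟩ := hcY.exists_gt N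
  obtain ⟨hin, hout⟩ := hN _ hNx.le
  obtain ⟨y₁, hy₁S, hy₁Y⟩ := hYU.exists_snoc_mem hx (hSo _) hin
  obtain ⟨y₀, hy₀S, hy₀Y⟩ := hYU.exists_snoc_mem hx isOpen_interior hout
  have h₁ := hmono hy₁Y
  have h₀ := hmono hy₀Y
  simp only [mem_preimage, mem_singleton_iff, Fin.snoc_last, Fin.init_snoc] at h₁ h₀
  rw [if_pos hy₁S] at h₁
  rw [if_neg (interior_subset hy₀S)] at h₀
  exact absurd (h₁.trans h₀.symm) (by decide)

/-- If the DDF collection on `⟨X 0, …, X (d-1)⟩` is not weakly ω-partition subregular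
(there is a countable coloring giving every somewhere-DDF set infinitely many colors),
then for any further perfect Polish space `X d` there is a 2-coloring of
`∏_{i ≤ d} X i` with no monochromatic somewhere-DDF subset. -/
theorem stmt10 (d : ℕ) (hd : 2 ≤ d)
    (X : Fin (d + 1) → Type) [t : ∀ i, TopologicalSpace (X i)]
    (hPolish : ∀ i, PolishSpace (X i)) (hperf : ∀ i, Perfect (Set.univ : Set (X i)))
    (hne : ∀ i, Nonempty (X i))
    (h : ∃ c : (∀ i : Fin d, X i.castSucc) → ℕ,
      ∀ Y : Set (∀ i : Fin d, X i.castSucc),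
        SomewhereDDF d (fun i => X i.castSucc) (fun i => inferInstance) Y →
        (c '' Y).Infinite) :
    ∃ γ : (∀ i, X i) → Fin 2,
      ∀ (j : Fin 2) (Y : Set (∀ i, X i)),
        SomewhereDDF (d + 1) X (fun i => inferInstance) Y →
        ¬ Y ⊆ γ ⁻¹' {j} :=
  stmt10_general d X (t := t) hPolish hperf h
end

section
/- In any perfect Polish space $X$ there is a sequence $(S_n)_{n<\omega}$ of open subsets with the property that for every nonempty open $U \subseteq X$ there is $N < \omega$ such that for all $n \geq N$, both $S_n \cap U \neq \emptyset$ and $\mathrm{Int}(X \setminus S_n) \cap U \neq \emptyset$. -/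
/-!
Fix a countable basis of nonempty open sets and exhaust it by finite subfamilies `𝒰 n`. For a
finite family of nonempty open sets in a perfect Hausdorff space, pick a point `x U` in each
member and then, since open sets are infinite, a second point `y U` in each member avoiding all
the `x`'s. Disjoint finite sets have disjoint open neighbourhoods `S ⊇ {x U}` and `V ⊇ {y U}`;
then `S` meets every member and so does `V ⊆ interior Sᶜ`. Every nonempty open set contains a
basic set, which lies in `𝒰 n` for all large `n`.
-/

open Set Filter TopologicalSpace

theorem IsOpen.infinite_of_nonempty {X : Type*} [TopologicalSpace X] [T1Space X] [PerfectSpace X]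
    {U : Set X} (hU : IsOpen U) (hne : U.Nonempty) : U.Infinite :=
  let ⟨x, hx⟩ := hne
  infinite_of_mem_nhds x (hU.mem_nhds hx)

theorem Set.Countable.exists_finite_eventually_mem {α : Type*} {b : Set α} (hb : b.Countable) :
    ∃ 𝒰 : ℕ → Set α, (∀ n, 𝒰 n ⊆ b) ∧ (∀ n, (𝒰 n).Finite) ∧
      ∀ V ∈ b, ∀ᶠ n in atTop, V ∈ 𝒰 n := by
  rcases b.eq_empty_or_nonempty with rfl | ⟨V₀, -⟩
  · exact ⟨fun _ => ∅, fun _ => subset_rfl, fun _ => finite_empty, by simp⟩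
  have : Nonempty α := ⟨V₀⟩
  obtain ⟨f, hf⟩ := countable_iff_exists_subset_range.1 hb
  refine ⟨fun n => b ∩ f '' Iic n, fun n => inter_subset_left,
    fun n => ((finite_Iic n).image f).inter_of_right b, fun V hV => ?_⟩
  obtain ⟨N, rfl⟩ := hf hV
  exact eventually_atTop.2 ⟨N, fun n hn => ⟨hV, N, hn, rfl⟩⟩

theorem exists_isOpen_inter_nonempty_and_interior_compl_inter_nonempty {X : Type*}
    [TopologicalSpace X] [T2Space X] [PerfectSpace X] {𝒰 : Set (Set X)} (h𝒰 : 𝒰.Finite)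
    (hopen : ∀ U ∈ 𝒰, IsOpen U) (hne : ∀ U ∈ 𝒰, U.Nonempty) :
    ∃ S, IsOpen S ∧ ∀ U ∈ 𝒰, (S ∩ U).Nonempty ∧ (interior Sᶜ ∩ U).Nonempty := by
  have : Finite 𝒰 := h𝒰.to_subtype
  choose x hx using fun U : 𝒰 => hne U U.2
  have hF : (range x).Finite := finite_range x
  have hy : ∀ U : 𝒰, ((U : Set X) \ range x).Nonempty := fun U =>
    ((hopen U U.2).infinite_of_nonempty ⟨x U, hx U⟩ |>.sdiff hF).nonempty
  choose y hyU hyx using hy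
  have hdisj : Disjoint (range x) (range y) := by
    rw [disjoint_right]
    rintro _ ⟨U, rfl⟩
    exact hyx U
  obtain ⟨S, V, hS, hV, hxS, hyV, hSV⟩ :=
    SeparatedNhds.of_isCompact_isCompact hF.isCompact (finite_range y).isCompact hdisj
  have hVS : V ⊆ interior Sᶜ := interior_maximal hSV.subset_compl_left hV
  exact ⟨S, hS, fun U hU =>
    ⟨⟨x ⟨U, hU⟩, hxS (mem_range_self _), hx ⟨U, hU⟩⟩,
      ⟨y ⟨U, hU⟩, hVS (hyV (mem_range_self _)), hyU ⟨U, hU⟩⟩⟩⟩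

/-- In any perfect Polish space `X` there is a sequence `(S n)` of open sets such that
every nonempty open `U ⊆ X` eventually meets both `S n` and the interior of the
complement of `S n`. -/
theorem stmt11 (X : Type) [TopologicalSpace X] [PolishSpace X]
    (hperf : Perfect (Set.univ : Set X)) :
    ∃ S : ℕ → Set X, (∀ n, IsOpen (S n)) ∧
      ∀ U : Set X, IsOpen U → U.Nonempty →
        ∃ N : ℕ, ∀ n ≥ N, (S n ∩ U).Nonempty ∧ (interior (S n)ᶜ ∩ U).Nonempty := by
  have : PerfectSpace X := ⟨hperf.acc⟩
  obtain ⟨b, hbc, hbe, hb⟩ := exists_countable_basis X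
  obtain ⟨𝒰, h𝒰b, h𝒰fin, h𝒰⟩ := hbc.exists_finite_eventually_mem
  choose S hSo hS using fun n =>
    exists_isOpen_inter_nonempty_and_interior_compl_inter_nonempty (h𝒰fin n)
      (fun V hV => hb.isOpen (h𝒰b n hV))
      (fun V hV => nonempty_iff_ne_empty.2 fun h => hbe (h ▸ h𝒰b n hV))
  refine ⟨S, hSo, fun U hU ⟨x, hx⟩ => ?_⟩
  obtain ⟨V, hVb, -, hVU⟩ := hb.exists_subset_of_mem_open hx hU
  obtain ⟨N, hN⟩ := eventually_atTop.1 (h𝒰 V hVb)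
  exact ⟨N, fun n hn => (hS n V (hN n hn)).imp
    (Nonempty.mono (inter_subset_inter_right _ hVU))
    (Nonempty.mono (inter_subset_inter_right _ hVU))⟩
end

section
/- Let $2 \leq d < \omega$ and suppose that for every countable coloring of any product of $d$ perfect Polish spaces there is a monochromatic somewhere dense grid (i.e., $\mathsf{PG}_d(\aleph_0)$ holds). Then $2^{\aleph_0} \geq \aleph_d$. -/
/-!
Kuratowski–Sierpiński: if `#S ≤ ℵₙ` then there is a countable colouring of `S^(n+1)` with
no monochromatic box `Y₀ × ⋯ × Yₙ` with infinite sides. For `n = 0` inject `S` into `ℕ`.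
For the step, well-order `S` in type `ω_{n+1}`, so that every initial segment has size
`≤ ℵₙ`; colour a tuple by the position of its largest entry `a` and by the colour of the
remaining entries in the segment below `a`. On a monochromatic box the largest entry always
sits in the same coordinate, which forces the other sides into one initial segment, where
the inner colouring is not constant.

If `𝔠 < ℵ_d`, apply this to `S = ℝ`: somewhere dense subsets of `ℝ` are infinite, so the
colouring contradicts `PG_d(ℵ₀)`.
-/

universe u

open Cardinal Set Function

theorem Cardinal.mk_Iic_le_of_ord_succ {c : Cardinal} (hc : ℵ₀ ≤ c)
    (t : (Order.succ c).ord.ToType) : #(Iic t) ≤ c :=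
  Order.lt_succ_iff.1 <| by
    simpa using mk_Iic_lt t (by simp) (by simpa using hc.trans (Order.le_succ c))

theorem Set.infinite_of_isOpen_subset_closure {X : Type*} [TopologicalSpace X] [T1Space X]
    [PerfectSpace X] {V Y : Set X} (hV : IsOpen V) (hVne : V.Nonempty) (hVY : V ⊆ closure Y) :
    Y.Infinite := fun hY =>
  have ⟨x, hx⟩ := hVne
  (infinite_of_mem_nhds x (hV.mem_nhds hx)).mono (hVY.trans hY.isClosed.closure_subset) hY

section Coloring

variable {X : Type u} {k : ℕ}

def NoInfiniteMonochromaticBox (S : Set X) (c : (Fin k → X) → ℕ) : Prop :=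
  ∀ Y : Fin k → Set X, (∀ i, Y i ⊆ S) → (∀ i, (Y i).Infinite) →
    ∀ j, ¬ pi univ Y ⊆ c ⁻¹' {j}

theorem exists_noInfiniteMonochromaticBox_one {S : Set X} (hS : S.Countable) :
    ∃ c : (Fin 1 → X) → ℕ, NoInfiniteMonochromaticBox S c := by
  obtain ⟨e, he⟩ := countable_iff_exists_injOn.1 hS
  refine ⟨fun x => e (x 0), fun Y hYS hY j hmono => ?_⟩
  obtain ⟨_, ⟨y, hy, rfl⟩, hne⟩ :=
    (((hY 0).image (he.mono (hYS 0))).sdiff (finite_singleton j)).nonempty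
  exact hne (@hmono (fun _ => y) fun i _ => by rwa [Fin.fin_one_eq_zero i])

theorem exists_noInfiniteMonochromaticBox_succ {W : Type*} [LinearOrder W] (φ : X → W)
    {S : Set X}
    (h : ∀ a, ∃ c : (Fin k → X) → ℕ,
      NoInfiniteMonochromaticBox (S ∩ φ ⁻¹' Iic (φ a)) c) :
    ∃ c : (Fin (k + 1) → X) → ℕ, NoInfiniteMonochromaticBox S c := by
  classical
  choose c hc using h
  choose top htop using fun x : Fin (k + 1) → X => Finite.exists_max (φ ∘ x)
  refine ⟨fun x => Nat.pair (top x) (c (x (top x)) ((top x).removeNth x)), ?_⟩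
  intro Y hYS hY j hmono
  obtain ⟨x₀, hx₀⟩ : (pi univ Y).Nonempty := univ_pi_nonempty_iff.2 fun i => (hY i).nonempty
  set K := top x₀
  have hconst : ∀ x ∈ pi univ Y,
      top x = K ∧ c (x K) (K.removeNth x) = c (x₀ K) (K.removeNth x₀) := by
    intro x hx
    obtain ⟨htopx, hcx⟩ := Nat.pair_eq_pair.1 ((hmono hx).trans (hmono hx₀).symm)
    have hK : top x = K := Fin.ext htopx
    rw [hK] at hcx
    exact ⟨hK, hcx⟩
  have hbelow : ∀ m ≠ K, Y m ⊆ S ∩ φ ⁻¹' Iic (φ (x₀ K)) := by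
    intro m hm b hb
    have hx : update x₀ m b ∈ pi univ Y := (update_mem_pi_iff_of_mem hx₀).2 fun _ => hb
    have hle := htop (update x₀ m b) m
    rw [(hconst _ hx).1] at hle
    exact ⟨hYS m hb, by simpa [update_of_ne hm.symm] using hle⟩
  refine hc (x₀ K) (fun i => Y (K.succAbove i)) (fun i => hbelow _ (Fin.succAbove_ne K i))
    (fun i => hY _) (c (x₀ K) (K.removeNth x₀)) fun g hg => ?_
  have hf : K.insertNth (x₀ K) g ∈ pi univ Y := by
    simp only [mem_univ_pi] at hx₀ hg ⊢
    exact (Fin.forall_iff_succAbove K).2 ⟨by simpa using hx₀ K, fun i => by simpa using hg i⟩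
  simpa using (hconst _ hf).2

theorem exists_noInfiniteMonochromaticBox (n : ℕ) (S : Set X) (hS : #S ≤ ℵ_ n) :
    ∃ c : (Fin (n + 1) → X) → ℕ, NoInfiniteMonochromaticBox S c := by
  induction n generalizing S with
  | zero =>
    exact exists_noInfiniteMonochromaticBox_one <| by
      simpa [le_aleph0_iff_set_countable] using hS
  | succ n ih =>
    let W := (Order.succ (ℵ_ n : Cardinal.{u})).ord.ToType
    have hW : #W = ℵ_ (n + 1 : ℕ) := by simp [W]
    have : Nonempty W := mk_ne_zero_iff.1 (hW ▸ (aleph_pos _).ne')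
    obtain ⟨φ, hφ⟩ : ∃ φ : X → W, InjOn φ S := by
      obtain ⟨ψ⟩ := (le_def S W).1 (hS.trans_eq hW.symm)
      exact exists_injOn_iff_injective.2 ⟨ψ, ψ.injective⟩
    refine exists_noInfiniteMonochromaticBox_succ φ fun a => ih _ ?_
    calc #(S ∩ φ ⁻¹' Iic (φ a) : Set X)
        = #(φ '' (S ∩ φ ⁻¹' Iic (φ a))) :=
          (mk_image_eq_of_injOn _ _ (hφ.mono inter_subset_left)).symm
      _ ≤ #(Iic (φ a)) :=
        mk_le_mk_of_subset ((image_mono inter_subset_right).trans (image_preimage_subset φ _))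
      _ ≤ ℵ_ n := mk_Iic_le_of_ord_succ (aleph0_le_aleph n) _

end Coloring

theorem stmt13_general (d : ℕ)
    (hPG : ∀ (X : Fin d → Type) (t : ∀ i, TopologicalSpace (X i)),
      (∀ i, @PolishSpace (X i) (t i)) →
      (∀ i, @Perfect (X i) (t i) Set.univ) →
      (∀ i, Nonempty (X i)) →
      ∀ γ : (∀ i, X i) → ℕ,
        ∃ (j : ℕ) (Y : ∀ i, Set (X i)),
          (∀ i, ∃ V : Set (X i), @IsOpen _ (t i) V ∧ V.Nonempty ∧
            V ⊆ @closure _ (t i) (Y i)) ∧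
          {f : ∀ i, X i | ∀ i, f i ∈ Y i} ⊆ γ ⁻¹' {j}) :
    Cardinal.aleph d ≤ Cardinal.continuum := by
  suffices h : ℵ_ (d : Ordinal.{0}) ≤ 𝔠 by simpa using lift_le.2 h
  cases d with
  | zero => simpa using aleph0_le_continuum
  | succ n =>
    by_contra! hlt
    have hℝ : #(univ : Set ℝ) ≤ ℵ_ n := by
      rw [mk_univ, mk_real, ← Order.lt_succ_iff, succ_aleph]
      exact_mod_cast hlt
    obtain ⟨c, hc⟩ := exists_noInfiniteMonochromaticBox n univ hℝ
    obtain ⟨j, Y, hY, hmono⟩ := hPG (fun _ => ℝ) (fun _ => inferInstance)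
      (fun _ => inferInstance) (fun _ => PerfectSpace.univ_perfect ℝ) (fun _ => inferInstance) c
    refine hc Y (fun _ => subset_univ _) (fun i => ?_) j fun f hf => hmono fun i => hf i trivial
    obtain ⟨V, hV, hVne, hVY⟩ := hY i
    exact infinite_of_isOpen_subset_closure hV hVne hVY

/-- If `PG_d(ℵ₀)` holds — every countable coloring of any product of `d` perfect
Polish spaces has a monochromatic somewhere dense grid — then `2^{ℵ₀} ≥ ℵ_d`. -/
theorem stmt13 (d : ℕ) (hd : 2 ≤ d)
    (hPG : ∀ (X : Fin d → Type) (t : ∀ i, TopologicalSpace (X i)),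
      (∀ i, @PolishSpace (X i) (t i)) →
      (∀ i, @Perfect (X i) (t i) Set.univ) →
      (∀ i, Nonempty (X i)) →
      ∀ γ : (∀ i, X i) → ℕ,
        ∃ (j : ℕ) (Y : ∀ i, Set (X i)),
          (∀ i, ∃ V : Set (X i), @IsOpen _ (t i) V ∧ V.Nonempty ∧
            V ⊆ @closure _ (t i) (Y i)) ∧
          {f : ∀ i, X i | ∀ i, f i ∈ Y i} ⊆ γ ⁻¹' {j}) :
    Cardinal.aleph d ≤ Cardinal.continuum :=
  stmt13_general d hPG
end

section
/- Assume $\mathsf{PG}_d$: for every $d$-sequence of perfect Polish spaces and every finite coloring of their product there is a monochromatic somewhere dense grid. Then the $d$-dimensional Halpern–Läuchli theorem holds: for any sequence $T_0, \ldots, T_{d-1}$ of rooted, perfect, finitely branching trees of height $\omega$ without terminal nodes, any $r < \omega$, and any coloring $\gamma : \bigotimes \vec T \to r$ of the level product, there are an infinite set $a \subseteq \omega$ and $a$-strong subtrees $S_i \subseteq T_i$ such that $\bigotimes \vec S$ is monochromatic for $\gamma$. -/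
/-!
Fix a nonprincipal ultrafilter `U` on `ω` and colour a `d`-tuple of branches by the colour that
`γ` takes on its level-`l` nodes for `U`-almost every `l`. The branch spaces are perfect Polish
spaces, so `PG_d` yields a colour `j` and sets `Y i` of branches, each dense above some node
`t i`, all of whose tuples get colour `j`. The strong subtrees are then built by fusion: at
stage `m` we hold finitely many branches from each `Y i`; through every immediate successor of
their level-`a m` nodes we choose a new branch of `Y i`, and since finitely many `U`-large sets
meet in an unbounded set, some level `a (m + 1) > a m` colours every tuple of new branches `j`.
-/

/-- A rooted, perfect, finitely branching tree of height `ω` without terminal nodes,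
represented as a set of finite sequences of natural numbers closed under prefixes.
Nodes at level `m` are the members of length `m`. -/
structure OmegaTree where
  mem : Set (List ℕ)
  root_mem : ([] : List ℕ) ∈ mem
  prefix_closed : ∀ s ∈ mem, ∀ t : List ℕ, t <+: s → t ∈ mem
  finitely_branching : ∀ s ∈ mem, {n : ℕ | s ++ [n] ∈ mem}.Finite
  no_terminal : ∀ s ∈ mem, ∃ n : ℕ, s ++ [n] ∈ mem
  perfect : ∀ s ∈ mem, ∃ t ∈ mem, s <+: t ∧
    ∃ n m : ℕ, n ≠ m ∧ t ++ [n] ∈ mem ∧ t ++ [m] ∈ mem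

/-- The branch space of an `OmegaTree`, topologized as a subspace of Baire space
(the topology of pointwise convergence). -/
def OmegaTree.Branch (T : OmegaTree) : Type :=
  {x : ℕ → ℕ // ∀ m : ℕ, (List.ofFn fun i : Fin m => x i) ∈ T.mem}

instance (T : OmegaTree) : TopologicalSpace T.Branch :=
  inferInstanceAs (TopologicalSpace {x : ℕ → ℕ // ∀ m : ℕ, (List.ofFn fun i : Fin m => x i) ∈ T.mem})

/-- The level-`m` node of a branch. -/
def OmegaTree.Branch.node {T : OmegaTree} (x : T.Branch) (m : ℕ) : List ℕ :=
  List.ofFn fun i : Fin m => x.val i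

/-- `S` is an `a`-strong subtree of `T`, where the infinite set `a ⊆ ω` is given by
its increasing enumeration `a : ℕ → ℕ`: all nodes of `S` lie on `T`-levels `a m`;
there is a unique node at level `a 0`; each node of `S` at level `a (m+1)` extends a
node of `S` at level `a m`; and for each node `s` of `S` at level `a m` and each
immediate successor of `s` in `T` there is exactly one node of `S` at level `a (m+1)`
extending it. -/
def IsStrongSubtree (T : OmegaTree) (a : ℕ → ℕ) (S : Set (List ℕ)) : Prop :=
  S ⊆ T.mem ∧
  (∀ s ∈ S, ∃ m : ℕ, s.length = a m) ∧
  (∃! s : List ℕ, s ∈ S ∧ s.length = a 0) ∧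
  (∀ m : ℕ, ∀ t ∈ S, t.length = a (m + 1) →
    ∃ s ∈ S, s.length = a m ∧ s <+: t) ∧
  (∀ m : ℕ, ∀ s ∈ S, s.length = a m → ∀ n : ℕ, s ++ [n] ∈ T.mem →
    ∃! t : List ℕ, t ∈ S ∧ t.length = a (m + 1) ∧ (s ++ [n]) <+: t)

open Filter Topology

theorem PiNat.hasBasis_nhds_cylinder {E : ℕ → Type*} [∀ n, TopologicalSpace (E n)]
    [∀ n, DiscreteTopology (E n)] (x : ∀ n, E n) :
    (𝓝 x).HasBasis (fun _ => True) (PiNat.cylinder x) := by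
  refine ⟨fun V => ⟨fun hV => ?_, fun ⟨n, _, hn⟩ => ?_⟩⟩
  · obtain ⟨_, ⟨y, n, rfl⟩, hxy, hsub⟩ := (PiNat.isTopologicalBasis_cylinders E).mem_nhds_iff.1 hV
    exact ⟨n, trivial, PiNat.mem_cylinder_iff_eq.1 hxy ▸ hsub⟩
  · exact mem_of_superset ((PiNat.isOpen_cylinder E x n).mem_nhds (PiNat.self_mem_cylinder x n)) hn

theorem Ultrafilter.exists_eventually_eq {α β : Type*} [Finite β] (U : Ultrafilter α)
    (c : α → β) : ∃ b, ∀ᶠ a in U, c a = b := by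
  obtain ⟨b, hb⟩ := (U.map c).eq_pure_of_finite
  exact ⟨b, show c ⁻¹' {b} ∈ U from (Ultrafilter.mem_map (m := c)).1 (hb ▸ rfl)⟩

theorem List.ofFn_prefix_ofFn {α : Type*} (x : ℕ → α) {m n : ℕ} (h : m ≤ n) :
    ofFn (fun i : Fin m => x i) <+: ofFn (fun i : Fin n => x i) := by
  rw [prefix_iff_eq_take]
  apply ext_getElem <;> simp [h]

theorem List.exists_seq_ofFn_eq {α : Type*} {p : ℕ → List α} (hp : ∀ k, p k <+: p (k + 1))
    (hlen : ∀ k, k ≤ (p k).length) :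
    ∃ x : ℕ → α, ∀ k, ofFn (fun i : Fin (p k).length => x i) = p k := by
  have hmono : ∀ k l, k ≤ l → p k <+: p l := fun k l hkl =>
    Nat.le_induction prefix_rfl (fun l _ ih => ih.trans (hp l)) l hkl
  refine ⟨fun n => (p (n + 1))[n]'(hlen (n + 1)), fun k => ext_getElem (by simp) ?_⟩
  intro i _ hi
  simp only [List.getElem_ofFn]
  rcases le_total (i + 1) k with h | h
  · exact (hmono _ _ h).getElem _
  · exact ((hmono _ _ h).getElem hi).symm

theorem exists_seq_of_forall_exists {α : Type*} {P : α → Prop} {R : α → α → Prop} {x₀ : α}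
    (h₀ : P x₀) (h : ∀ x, P x → ∃ y, P y ∧ R x y) :
    ∃ f : ℕ → α, f 0 = x₀ ∧ ∀ n, P (f n) ∧ R (f n) (f (n + 1)) := by
  choose next hnext using fun x : {x // P x} => h x.1 x.2
  let step : {x // P x} → {x // P x} := fun x => ⟨next x, (hnext x).1⟩
  refine ⟨fun n => (step^[n] ⟨x₀, h₀⟩).1, rfl, fun n => ⟨(step^[n] _).2, ?_⟩⟩
  show R (step^[n] _).1 (step^[n + 1] _).1
  rw [Function.iterate_succ_apply']
  exact (hnext _).2

namespace OmegaTree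

variable {T : OmegaTree}

@[simp] theorem Branch.node_length (x : T.Branch) (m : ℕ) : (x.node m).length = m :=
  List.length_ofFn

theorem Branch.node_mem (x : T.Branch) (m : ℕ) : x.node m ∈ T.mem := x.property m

theorem Branch.node_prefix (x : T.Branch) {k l : ℕ} (h : k ≤ l) : x.node k <+: x.node l :=
  List.ofFn_prefix_ofFn x.val h

theorem Branch.node_eq_of_prefix {x : T.Branch} {s : List ℕ} {l : ℕ} (h : s <+: x.node l) :
    x.node s.length = s := by
  have hl : s.length ≤ l := by simpa using h.length_le
  exact (List.prefix_of_prefix_length_le (x.node_prefix hl) h (by simp)).eq_of_length (by simp)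

theorem Branch.node_eq_of_node_prefix {x y : T.Branch} {m l : ℕ} (h : x.node m <+: y.node l) :
    y.node m = x.node m := by
  simpa only [Branch.node_length] using Branch.node_eq_of_prefix h

theorem Branch.prefix_node {x : T.Branch} {s : List ℕ} {l : ℕ} (h : x.node s.length = s)
    (hl : s.length ≤ l) : s <+: x.node l :=
  h ▸ x.node_prefix hl

theorem Branch.node_eq_node_iff_mem_cylinder {x y : T.Branch} {m : ℕ} :
    y.node m = x.node m ↔ y.val ∈ PiNat.cylinder x.val m := by
  simp [Branch.node, List.ofFn_inj, funext_iff, PiNat.mem_cylinder_iff, Fin.forall_iff]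

theorem Branch.hasBasis_nhds (x : T.Branch) :
    (𝓝 x).HasBasis (fun _ => True) fun m => {y | y.node m = x.node m} := by
  rw [show 𝓝 x = comap Subtype.val (𝓝 x.val) from nhds_induced _ _]
  simp only [Branch.node_eq_node_iff_mem_cylinder]
  exact (PiNat.hasBasis_nhds_cylinder x.val).comap Subtype.val

theorem exists_branch_node_eq {s : List ℕ} (hs : s ∈ T.mem) :
    ∃ x : T.Branch, x.node s.length = s := by
  have hsucc : ∀ t : List ℕ, ∃ n : ℕ, t ∈ T.mem → t ++ [n] ∈ T.mem := fun t =>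
    (em (t ∈ T.mem)).elim (fun ht => (T.no_terminal t ht).imp fun _ h _ => h)
      fun ht => ⟨0, fun h => (ht h).elim⟩
  choose next hnext using hsucc
  set p : ℕ → List ℕ := fun k => (fun t => t ++ [next t])^[k] s
  have hp_succ : ∀ k, p (k + 1) = p k ++ [next (p k)] := fun k =>
    Function.iterate_succ_apply' _ k s
  have hp_mem : ∀ k, p k ∈ T.mem := fun k => by
    induction k with
    | zero => exact hs
    | succ k ih => exact hp_succ k ▸ hnext _ ih
  have hp_len : ∀ k, (p k).length = s.length + k := fun k => by
    induction k with
    | zero => rfl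
    | succ k ih => simp [hp_succ, ih, Nat.add_assoc]
  obtain ⟨x, hx⟩ := List.exists_seq_ofFn_eq (fun k => hp_succ k ▸ List.prefix_append _ _)
    fun k => (hp_len k).symm ▸ Nat.le_add_left k _
  have hx_mem : ∀ m, List.ofFn (fun i : Fin m => x i) ∈ T.mem := fun m =>
    T.prefix_closed _ (hp_mem m) _ <| hx m ▸ List.ofFn_prefix_ofFn x (by rw [hp_len]; omega)
  exact ⟨⟨x, hx_mem⟩, hx 0⟩

instance : Nonempty T.Branch :=
  (exists_branch_node_eq T.root_mem).nonempty

theorem Branch.exists_ne_node_eq (x : T.Branch) (m : ℕ) :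
    ∃ y : T.Branch, y ≠ x ∧ y.node m = x.node m := by
  obtain ⟨t, ht, hxt, n, n', hnn', hn, hn'⟩ := T.perfect (x.node m) (x.node_mem m)
  obtain ⟨k, hk, hkx⟩ : ∃ k, t ++ [k] ∈ T.mem ∧ t ++ [k] ≠ x.node (t.length + 1) := by
    by_cases h : t ++ [n] = x.node (t.length + 1)
    · exact ⟨n', hn', fun h' => hnn' (by simpa using h.trans h'.symm)⟩
    · exact ⟨n, hn, h⟩
  obtain ⟨y, hy⟩ := exists_branch_node_eq hk
  rw [List.length_append, List.length_singleton] at hy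
  refine ⟨y, fun hyx => hkx (hyx ▸ hy.symm), ?_⟩
  exact Branch.node_eq_of_node_prefix (hy ▸ hxt.trans (List.prefix_append t [k]))

theorem isClosed_setOf_branch :
    IsClosed {x : ℕ → ℕ | ∀ m, (List.ofFn fun i : Fin m => x i) ∈ T.mem} := by
  simp only [Set.ofPred_forall]
  refine isClosed_iInter fun m => ?_
  have hres : Continuous fun (x : ℕ → ℕ) (i : Fin m) => x i :=
    continuous_pi fun i => continuous_apply (i : ℕ)
  exact (isClosed_discrete {v : Fin m → ℕ | List.ofFn v ∈ T.mem}).preimage hres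

instance : PolishSpace T.Branch :=
  isClosed_setOf_branch.polishSpace

instance : PerfectSpace T.Branch := by
  rw [perfectSpace_def, preperfect_iff_nhds]
  intro x _ V hV
  obtain ⟨m, -, hm⟩ := x.hasBasis_nhds.mem_iff.1 hV
  obtain ⟨y, hyx, hy⟩ := x.exists_ne_node_eq m
  exact ⟨y, ⟨hm hy, trivial⟩, hyx⟩

def DenseAbove (Y : Set T.Branch) (t : List ℕ) : Prop :=
  ∀ s ∈ T.mem, t <+: s → ∃ y ∈ Y, y.node s.length = s

theorem exists_denseAbove_of_subset_closure {Y V : Set T.Branch} (hV : IsOpen V)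
    (hne : V.Nonempty) (hVY : V ⊆ closure Y) : ∃ t ∈ T.mem, DenseAbove Y t := by
  obtain ⟨x, hx⟩ := hne
  obtain ⟨m, -, hm⟩ := x.hasBasis_nhds.mem_iff.1 (hV.mem_nhds hx)
  refine ⟨x.node m, x.node_mem m, fun s hs hxs => ?_⟩
  obtain ⟨w, hw⟩ := exists_branch_node_eq hs
  have hwx : w.node m = x.node m := Branch.node_eq_of_node_prefix (hw ▸ hxs)
  obtain ⟨y, hyY, hy⟩ :=
    (mem_closure_iff_nhds_basis w.hasBasis_nhds).1 (hVY (hm hwx)) s.length trivial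
  exact ⟨y, hyY, hy.trans hw⟩

theorem DenseAbove.exists_pick {Y : Set T.Branch} {t : List ℕ} (hY : DenseAbove Y t) :
    ∃ pick : List ℕ → T.Branch, (∀ s ∈ T.mem, (pick s).node s.length = s) ∧
      ∀ s ∈ T.mem, t <+: s → pick s ∈ Y := by
  have h : ∀ s, ∃ y : T.Branch, s ∈ T.mem → y.node s.length = s ∧ (t <+: s → y ∈ Y) := by
    intro s
    by_cases hs : s ∈ T.mem
    · by_cases hts : t <+: s
      · obtain ⟨y, hyY, hy⟩ := hY s hs hts
        exact ⟨y, fun _ => ⟨hy, fun _ => hyY⟩⟩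
      · obtain ⟨y, hy⟩ := exists_branch_node_eq hs
        exact ⟨y, fun _ => ⟨hy, fun h => absurd h hts⟩⟩
    · exact ⟨Classical.arbitrary _, fun h => absurd h hs⟩
  choose pick hpick using h
  exact ⟨pick, fun s hs => (hpick s hs).1, fun s hs => (hpick s hs).2⟩

def succNodes (B : Set T.Branch) (l : ℕ) : Set (List ℕ) :=
  {s | s ∈ T.mem ∧ ∃ y ∈ B, ∃ n, s = y.node l ++ [n]}

theorem succNodes_finite {B : Set T.Branch} (hB : B.Finite) (l : ℕ) :
    (succNodes B l).Finite := by
  refine (hB.biUnion fun y _ => (T.finitely_branching _ (y.node_mem l)).image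
    fun n => y.node l ++ [n]).subset ?_
  rintro s ⟨hs, y, hy, n, rfl⟩
  exact Set.mem_biUnion hy ⟨n, hs, rfl⟩

def nodesAlong (B : ℕ → Set T.Branch) (a : ℕ → ℕ) : Set (List ℕ) :=
  {s | ∃ m, ∃ y ∈ B m, y.node (a m) = s}

theorem exists_of_mem_nodesAlong {B : ℕ → Set T.Branch} {a : ℕ → ℕ} (ha : a.Injective)
    {s : List ℕ} (hs : s ∈ nodesAlong B a) {m : ℕ} (hlen : s.length = a m) :
    ∃ y ∈ B m, y.node (a m) = s := by
  obtain ⟨k, y, hy, rfl⟩ := id hs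
  obtain rfl : k = m := ha (by simpa using hlen)
  exact ⟨y, hy, rfl⟩

theorem isStrongSubtree_nodesAlong {a : ℕ → ℕ} (ha : StrictMono a) {pick : List ℕ → T.Branch}
    (hpick : ∀ s ∈ T.mem, (pick s).node s.length = s) {B : ℕ → Set T.Branch} {y₀ : T.Branch}
    (h₀ : B 0 = {y₀}) (hsucc : ∀ m, B (m + 1) = pick '' succNodes (B m) (a m)) :
    IsStrongSubtree T a (nodesAlong B a) := by
  have hlevel := @exists_of_mem_nodesAlong _ B a ha.injective
  have hpick_prefix : ∀ m, ∀ s ∈ succNodes (B m) (a m), s <+: (pick s).node (a (m + 1)) := by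
    rintro m s ⟨hs, y, -, n, rfl⟩
    exact Branch.prefix_node (hpick _ hs) (by simpa using ha (Nat.lt_succ_self m))
  refine ⟨?_, ?_, ?_, ?_, ?_⟩
  · rintro s ⟨m, y, -, rfl⟩
    exact y.node_mem _
  · rintro s ⟨m, y, -, rfl⟩
    exact ⟨m, by simp⟩
  · refine ⟨y₀.node (a 0), ⟨⟨0, y₀, h₀ ▸ rfl, rfl⟩, by simp⟩, ?_⟩
    rintro s ⟨hs, hlen⟩
    obtain ⟨y, hy, rfl⟩ := hlevel hs hlen
    rw [h₀] at hy
    rw [hy]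
  · intro m t ht hlen
    obtain ⟨z, hz, rfl⟩ := hlevel ht hlen
    rw [hsucc] at hz
    obtain ⟨s, hs, rfl⟩ := hz
    obtain ⟨-, y, hy, n, rfl⟩ := id hs
    exact ⟨y.node (a m), ⟨m, y, hy, rfl⟩, by simp,
      (List.prefix_append _ _).trans (hpick_prefix m _ hs)⟩
  · intro m s hs hlen n hn
    obtain ⟨y, hy, rfl⟩ := hlevel hs hlen
    have hsn : y.node (a m) ++ [n] ∈ succNodes (B m) (a m) := ⟨hn, y, hy, n, rfl⟩
    refine ⟨(pick _).node (a (m + 1)),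
      ⟨⟨m + 1, _, hsucc m ▸ Set.mem_image_of_mem pick hsn, rfl⟩, by simp, hpick_prefix m _ hsn⟩, ?_⟩
    rintro t ⟨ht, hlen', hnt⟩
    obtain ⟨z, hz, rfl⟩ := hlevel ht hlen'
    rw [hsucc] at hz
    obtain ⟨s', hs', rfl⟩ := hz
    obtain ⟨-, y', -, n', rfl⟩ := id hs'
    have hsame : y'.node (a m) ++ [n'] = y.node (a m) ++ [n] :=
      (List.prefix_of_prefix_length_le (hpick_prefix m _ hs') hnt (by simp)).eq_of_length
        (by simp)
    rw [hsame]

section Fusion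

variable {ι : Type*} [Finite ι] {T : ι → OmegaTree} {F : Filter ℕ} [F.NeBot]
  {Y : ∀ i, Set (T i).Branch} {P : (ι → List ℕ) → Prop}

theorem exists_level_monochromatic (hF : F ≤ atTop)
    (hY : ∀ g ∈ Set.univ.pi Y, ∀ᶠ l in F, P fun i => (g i).node l)
    {B : ∀ i, Set (T i).Branch} (hfin : ∀ i, (B i).Finite) (hBY : ∀ i, B i ⊆ Y i)
    {Q : ℕ → Prop} (hQ : ∀ᶠ l in atTop, Q l) :
    ∃ l, Q l ∧ ∀ g ∈ Set.univ.pi B, P fun i => (g i).node l :=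
  (Eventually.and (hF hQ) ((Set.Finite.pi hfin).eventually_all.2
    fun g hg => hY g fun i _ => hBY i (hg i trivial))).exists

variable {pick : ∀ i, List ℕ → (T i).Branch} {t : ι → List ℕ}

theorem exists_fusion_step (hF : F ≤ atTop)
    (hY : ∀ g ∈ Set.univ.pi Y, ∀ᶠ l in F, P fun i => (g i).node l)
    (hpick : ∀ i, ∀ s ∈ (T i).mem, (pick i s).node s.length = s)
    (hpickY : ∀ i, ∀ s ∈ (T i).mem, t i <+: s → pick i s ∈ Y i)
    {B : ∀ i, Set (T i).Branch} {l : ℕ} (hfin : ∀ i, (B i).Finite)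
    (hBY : ∀ i, ∀ y ∈ B i, y ∈ Y i ∧ t i <+: y.node l) :
    ∃ l' > l, (∀ i, ∀ z ∈ pick i '' succNodes (B i) l, z ∈ Y i ∧ t i <+: z.node l') ∧
      ∀ g ∈ Set.univ.pi (fun i => pick i '' succNodes (B i) l), P fun i => (g i).node l' := by
  have hsucc : ∀ i, ∀ s ∈ succNodes (B i) l, s ∈ (T i).mem ∧ t i <+: s ∧ s.length = l + 1 := by
    rintro i s ⟨hs, y, hy, n, rfl⟩
    exact ⟨hs, (hBY i y hy).2.trans (List.prefix_append _ _), by simp⟩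
  have hY' : ∀ i, pick i '' succNodes (B i) l ⊆ Y i := by
    rintro i _ ⟨s, hs, rfl⟩
    exact hpickY i s (hsucc i s hs).1 (hsucc i s hs).2.1
  obtain ⟨l', hll', hcolor⟩ := exists_level_monochromatic hF hY
    (fun i => (succNodes_finite (hfin i) l).image _) hY' (eventually_gt_atTop l)
  refine ⟨l', hll', ?_, hcolor⟩
  rintro i _ ⟨s, hs, rfl⟩
  obtain ⟨hsT, hts, hlen⟩ := hsucc i s hs
  exact ⟨hY' i ⟨s, hs, rfl⟩, hts.trans (Branch.prefix_node (hpick i s hsT) (by omega))⟩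

theorem exists_fusion_monochromatic (hF : F ≤ atTop)
    (hY : ∀ g ∈ Set.univ.pi Y, ∀ᶠ l in F, P fun i => (g i).node l)
    (ht : ∀ i, t i ∈ (T i).mem) (hpick : ∀ i, ∀ s ∈ (T i).mem, (pick i s).node s.length = s)
    (hpickY : ∀ i, ∀ s ∈ (T i).mem, t i <+: s → pick i s ∈ Y i) :
    ∃ (a : ℕ → ℕ) (B : ℕ → ∀ i, Set (T i).Branch), StrictMono a ∧
      (∀ i, B 0 i = {pick i (t i)}) ∧
      (∀ m i, B (m + 1) i = pick i '' succNodes (B m i) (a m)) ∧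
      ∀ m, ∀ g ∈ Set.univ.pi (B m), P fun i => (g i).node (a m) := by
  -- `t i <+: y.node l` keeps the successor nodes above `t i`, where `pick i` lands in `Y i`.
  let Good : ℕ × (∀ i, Set (T i).Branch) → Prop := fun ⟨l, B⟩ =>
    (∀ i, (B i).Finite) ∧ (∀ i, ∀ y ∈ B i, y ∈ Y i ∧ t i <+: y.node l) ∧
      ∀ g ∈ Set.univ.pi B, P fun i => (g i).node l
  have hstep : ∀ x, Good x → ∃ x', Good x' ∧
      x.1 < x'.1 ∧ x'.2 = fun i => pick i '' succNodes (x.2 i) x.1 := by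
    rintro ⟨l, B⟩ ⟨hfin, hBY, -⟩
    obtain ⟨l', hll', hBY', hcolor⟩ := exists_fusion_step hF hY hpick hpickY hfin hBY
    exact ⟨⟨l', _⟩, ⟨fun i => (succNodes_finite (hfin i) l).image _, hBY', hcolor⟩, hll', rfl⟩
  obtain ⟨l₀, hl₀, hcolor₀⟩ := exists_level_monochromatic hF hY
    (B := fun i => {pick i (t i)}) (fun i => Set.finite_singleton _)
    (fun i => Set.singleton_subset_iff.2 (hpickY i _ (ht i) List.prefix_rfl))
    (eventually_all.2 fun i => eventually_ge_atTop (t i).length)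
  have hGood₀ : Good (l₀, fun i => {pick i (t i)}) := by
    refine ⟨fun i => Set.finite_singleton _, fun i y hy => ?_, hcolor₀⟩
    rw [Set.mem_singleton_iff.1 hy]
    exact ⟨hpickY i _ (ht i) List.prefix_rfl, Branch.prefix_node (hpick i _ (ht i)) (hl₀ i)⟩
  obtain ⟨f, hf₀, hf⟩ := exists_seq_of_forall_exists hGood₀ hstep
  refine ⟨fun m => (f m).1, fun m => (f m).2, strictMono_nat_of_lt_succ fun m => (hf m).2.1,
    fun i => by simp only [hf₀], fun m i => congrFun (hf m).2.2 i, fun m => (hf m).1.2.2⟩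

end Fusion

end OmegaTree

open OmegaTree

theorem stmt14_general (d : ℕ)
    (hPG : ∀ (X : Fin d → Type) (t : ∀ i, TopologicalSpace (X i)),
      (∀ i, @PolishSpace (X i) (t i)) →
      (∀ i, @Perfect (X i) (t i) Set.univ) →
      (∀ i, Nonempty (X i)) →
      ∀ (r : ℕ) (γ : (∀ i, X i) → Fin r),
        ∃ (j : Fin r) (Y : ∀ i, Set (X i)),
          (∀ i, ∃ V : Set (X i), @IsOpen _ (t i) V ∧ V.Nonempty ∧
            V ⊆ @closure _ (t i) (Y i)) ∧
          {f : ∀ i, X i | ∀ i, f i ∈ Y i} ⊆ γ ⁻¹' {j})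
    (T : Fin d → OmegaTree) (r : ℕ)
    (γ : (Fin d → List ℕ) → Fin r) :
    ∃ (a : ℕ → ℕ) (S : Fin d → Set (List ℕ)) (j : Fin r),
      StrictMono a ∧
      (∀ i, IsStrongSubtree (T i) a (S i)) ∧
      ∀ (m : ℕ) (f : Fin d → List ℕ),
        (∀ i, f i ∈ S i ∧ (f i).length = a m) → γ f = j := by
  let U : Ultrafilter ℕ := .of atTop
  choose γU hγU using fun g : ∀ i, (T i).Branch =>
    U.exists_eventually_eq fun l => γ fun i => (g i).node l
  obtain ⟨j, Y, hYdense, hYcolor⟩ := hPG (fun i => (T i).Branch) (fun _ => inferInstance)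
    (fun _ => inferInstance) (fun _ => PerfectSpace.univ_perfect _) (fun _ => inferInstance) r γU
  choose t ht hYt using fun i =>
    have ⟨_, hV, hne, hVY⟩ := hYdense i
    exists_denseAbove_of_subset_closure hV hne hVY
  choose pick hpick hpickY using fun i => (hYt i).exists_pick
  obtain ⟨a, B, ha, hB₀, hBsucc, hBcolor⟩ := exists_fusion_monochromatic (Ultrafilter.of_le atTop)
    (P := fun f => γ f = j) (fun g hg => hYcolor (fun i => hg i trivial) ▸ hγU g) ht hpick hpickY
  refine ⟨a, fun i => nodesAlong (B · i) a, j, ha,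
    fun i => isStrongSubtree_nodesAlong ha (hpick i) (hB₀ i) (hBsucc · i), fun m f hf => ?_⟩
  choose g hgB hgf using fun i => exists_of_mem_nodesAlong ha.injective (hf i).1 (hf i).2
  rw [← funext hgf]
  exact hBcolor m g fun i _ => hgB i

/-- `PG_d` implies the `d`-dimensional Halpern–Läuchli theorem: assuming that every
finite coloring of any product of `d` perfect Polish spaces admits a monochromatic
somewhere dense grid, for any trees `T 0, …, T (d-1)` and any finite coloring `γ` of
the level product there are an infinite `a ⊆ ω` (given by its increasing enumeration)
and `a`-strong subtrees `S i ⊆ T i` whose level product is monochromatic for `γ`. -/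
theorem stmt14 (d : ℕ) (hd : 1 ≤ d)
    (hPG : ∀ (X : Fin d → Type) (t : ∀ i, TopologicalSpace (X i)),
      (∀ i, @PolishSpace (X i) (t i)) →
      (∀ i, @Perfect (X i) (t i) Set.univ) →
      (∀ i, Nonempty (X i)) →
      ∀ (r : ℕ) (γ : (∀ i, X i) → Fin r),
        ∃ (j : Fin r) (Y : ∀ i, Set (X i)),
          (∀ i, ∃ V : Set (X i), @IsOpen _ (t i) V ∧ V.Nonempty ∧
            V ⊆ @closure _ (t i) (Y i)) ∧
          {f : ∀ i, X i | ∀ i, f i ∈ Y i} ⊆ γ ⁻¹' {j})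
    (T : Fin d → OmegaTree) (r : ℕ) (hr : 1 ≤ r)
    (γ : (Fin d → List ℕ) → Fin r) :
    ∃ (a : ℕ → ℕ) (S : Fin d → Set (List ℕ)) (j : Fin r),
      StrictMono a ∧
      (∀ i, IsStrongSubtree (T i) a (S i)) ∧
      ∀ (m : ℕ) (f : Fin d → List ℕ),
        (∀ i, f i ∈ S i ∧ (f i).length = a m) → γ f = j :=
  stmt14_general d hPG T r γ
end

section
/- For all $n < \omega$, the Partition Hypothesis $\mathrm{PH}_n(\omega_n)$ fails: there is a coloring $c : (\omega_n)^{n+1} \to \omega$ (or into a countable set) such that for no $(n+1)$-cofinal function $F : (\omega_n)^{\leq n+1} \to \omega_n$ is $c \circ F^\ast$ constant on $(\omega_n)^{\llbracket n+1 \rrbracket}$. -/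
/-!
By induction on `n`, every set `S` of size at most `ℵ_n` carries a colouring `c` of
`(n + 1)`-tuples with a pivot map `d` such that two tuples of colour `k` that agree off the
coordinate `d k` are equal (the property of the colourings `c_n`). For `n = 0` colour by an
injection `S → ℕ`. For `n + 1`, rank `S` in order type `ω_{n+1}` and colour a tuple by the
position of its largest entry `z` together with the colour and pivot of the remaining tuple,
which lives in the down-set of `z`, a set of size at most `ℵ_n`.

If `c ∘ F*` were constantly `k`, let `i = d k`, fix `a`, and pick `x > F(a^{i+1})`. The prefixes
of `a^{i+1} x^{n+1-i}` form a chain, and replacing its `i`-th member `a^{i+1}` by `a^i x` gives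
another one. Their images under `F*` have the same colour and agree off `i`, hence are equal,
yet `F(a^i x) ≥ F⟨x⟩ ≥ x > F(a^{i+1})`.
-/

open Cardinal Set

universe u

section Pivot

variable {α κ : Type*} {m : ℕ}

def IsPivotalOn (S : Set α) (c : (Fin m → α) → κ) (d : κ → Fin m) : Prop :=
  ∀ ⦃t t' : Fin m → α⦄, (∀ j, t j ∈ S) → (∀ j, t' j ∈ S) → c t = c t' →
    (∀ j, j ≠ d (c t) → t j = t' j) → t = t'

theorem IsPivotalOn.encode [Encodable κ] [NeZero m] {S : Set α} {c : (Fin m → α) → κ}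
    {d : κ → Fin m} (h : IsPivotalOn S c d) :
    IsPivotalOn S (fun t => Encodable.encode (c t))
      (fun k => ((Encodable.decode k).map d).getD 0) := by
  intro t t' ht ht' hc hagree
  refine h ht ht' (Encodable.encode_injective hc) fun j hj => hagree j ?_
  simpa [Encodable.encodek] using hj

theorem exists_isPivotalOn_of_countable {S : Set α} (hS : S.Countable) :
    ∃ (c : (Fin 1 → α) → ℕ) (d : ℕ → Fin 1), IsPivotalOn S c d := by
  obtain ⟨f, hf⟩ := Set.countable_iff_exists_injOn.mp hS
  refine ⟨fun t => f (t 0), fun _ => 0, fun t t' ht ht' hc _ => ?_⟩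
  funext j
  rw [Subsingleton.elim j 0]
  exact hf (ht 0) (ht' 0) hc

theorem exists_isPivotalOn_succ {β : Type*} [LinearOrder β] (f : α → β) (S : Set α)
    (h : ∀ z, ∃ (c : (Fin m → α) → ℕ) (d : ℕ → Fin m), IsPivotalOn {x ∈ S | f x ≤ f z} c d) :
    ∃ (c : (Fin (m + 1) → α) → Fin (m + 1) × ℕ × Fin m)
      (d : Fin (m + 1) × ℕ × Fin m → Fin (m + 1)), IsPivotalOn S c d := by
  choose cz dz hpiv using h
  choose top htop using fun t : Fin (m + 1) → α => Finite.exists_max (f ∘ t)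
  refine ⟨fun t => (top t, cz (t (top t)) ((top t).removeNth t),
      dz (t (top t)) (cz (t (top t)) ((top t).removeNth t))),
    fun p => p.1.succAbove p.2.2, fun t t' ht ht' hc hagree => ?_⟩
  simp only [Prod.mk.injEq] at hc hagree
  obtain ⟨htop_eq, hcol, -⟩ := hc
  rw [← htop_eq] at hcol
  have hz : t (top t) = t' (top t) := hagree _ (Fin.succAbove_ne _ _).symm
  have hrest : (top t).removeNth t = (top t).removeNth t' := by
    refine hpiv (t (top t)) (fun i => ⟨ht _, htop t _⟩) (fun i => ⟨ht' _, ?_⟩) (hcol.trans ?_) ?_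
    · rw [hz, htop_eq]
      exact htop t' _
    · rw [hz]
    · exact fun i hi => hagree _ fun h => hi (Fin.succAbove_right_injective h)
  rw [← Fin.insertNth_self_removeNth (top t) t, ← Fin.insertNth_self_removeNth (top t) t', hz,
    hrest]

end Pivot

theorem exists_rank_card_downset_le {α : Type u} {c : Cardinal.{u}} (hc : ℵ₀ ≤ c) {S : Set α}
    (hS : #S ≤ Order.succ c) :
    ∃ f : α → (Order.succ c).ord.ToType, ∀ z, #{x ∈ S | f x ≤ f z} ≤ c := by
  classical
  obtain ⟨g⟩ := (Cardinal.le_def _ _).mp (hS.trans_eq (mk_ord_toType _).symm)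
  have : Nonempty (Order.succ c).ord.ToType := Ordinal.nonempty_toType_iff.mpr (by simp)
  refine ⟨fun x => if h : x ∈ S then g ⟨x, h⟩ else Classical.arbitrary _, fun z => ?_⟩
  set y := if h : z ∈ S then g ⟨z, h⟩ else Classical.arbitrary _
  calc #{x ∈ S | _ ≤ y}
      ≤ #(Iic y) := by
        refine mk_le_of_injective (f := fun x => ⟨g ⟨x, x.2.1⟩, ?_⟩) ?_
        · simpa [dif_pos x.2.1] using x.2.2
        · intro a b hab
          exact Subtype.ext (by simpa using g.injective (Subtype.ext_iff.mp hab))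
    _ ≤ #(Iio y) + 1 := by rw [← Iio_insert]; exact mk_insert_le
    _ ≤ c + 1 := by
        gcongr
        refine Order.lt_succ_iff.mp ((mk_Iio_lt y ?_).trans_eq (mk_ord_toType _))
        rw [mk_ord_toType, Ordinal.type_toType]
    _ = c := add_one_of_aleph0_le hc

theorem exists_isPivotalOn_of_card_le_aleph {α : Type u} (n : ℕ) {S : Set α} (hS : #S ≤ ℵ_ n) :
    ∃ (c : (Fin (n + 1) → α) → ℕ) (d : ℕ → Fin (n + 1)), IsPivotalOn S c d := by
  induction n generalizing S with
  | zero =>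
    exact exists_isPivotalOn_of_countable
      (le_aleph0_iff_set_countable.mp (by simpa using hS))
  | succ n ih =>
    obtain ⟨f, hf⟩ := exists_rank_card_downset_le (aleph0_le_aleph n)
      (hS.trans_eq (by rw [succ_aleph]; norm_cast))
    obtain ⟨c, d, h⟩ := exists_isPivotalOn_succ f S fun z => ih (hf z)
    exact ⟨_, _, h.encode⟩

section Chain

variable {Λ : Type*}

/-- The elements of `Λ^⟦m⟧`. -/
def IsSublistChain {m : ℕ} (σ : Fin m → List Λ) : Prop :=
  (∀ i, (σ i).length = i + 1) ∧ ∀ i j, i ≤ j → (σ i).Sublist (σ j)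

theorem isSublistChain_take {m : ℕ} {L : List Λ} (hL : m ≤ L.length) :
    IsSublistChain fun i : Fin m => L.take (i + 1) :=
  ⟨fun i => by simp; omega, fun i j hij => List.take_sublist_take_left (by simpa using hij)⟩

theorem isSublistChain_update_eraseIdx {m : ℕ} {L : List Λ} (hL : m + 1 ≤ L.length) (i : Fin m) :
    IsSublistChain (Function.update (fun j : Fin m => L.take (j + 1)) i
      ((L.take (i + 2)).eraseIdx i)) := by
  obtain ⟨hlen, hsub⟩ := isSublistChain_take (L := L) (by omega : m ≤ L.length)
  have hlen_i : ((L.take (i + 2)).eraseIdx i).length = i + 1 := by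
    rw [List.length_eraseIdx_of_lt (by simp; omega)]; simp; omega
  have hbelow : ∀ j : Fin m, j < i → (L.take (j + 1)).Sublist ((L.take (i + 2)).eraseIdx i) := by
    intro j hj
    rw [List.eraseIdx_eq_take_drop_succ, List.take_take, min_eq_left (by omega)]
    exact (List.take_sublist_take_left (by omega)).trans (List.sublist_append_left _ _)
  have habove : ∀ j : Fin m, i < j → ((L.take (i + 2)).eraseIdx i).Sublist (L.take (j + 1)) :=
    fun j hj => (List.eraseIdx_sublist _ _).trans (List.take_sublist_take_left (by omega))
  refine ⟨fun j => ?_, fun j j' hjj' => ?_⟩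
  · rcases eq_or_ne j i with rfl | hj
    · simpa using hlen_i
    · simpa [hj] using hlen j
  · by_cases hj : j = i <;> by_cases hj' : j' = i <;>
      simp only [Function.update_apply, hj, hj', if_true, if_false]
    · exact .refl _
    · exact habove j' (lt_of_le_of_ne (hj ▸ hjj') (Ne.symm hj'))
    · exact hbelow j (lt_of_le_of_ne (hj' ▸ hjj') hj)
    · exact hsub j j' hjj'

theorem not_forall_eq_of_isPivotalOn [Preorder Λ] [NoMaxOrder Λ] [Nonempty Λ] {κ : Type*}
    {n : ℕ} {c : (Fin (n + 1) → Λ) → κ} {d : κ → Fin (n + 1)} (hc : IsPivotalOn univ c d)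
    {F : List Λ → Λ} (hF₁ : ∀ x, x ≤ F [x])
    (hF₂ : ∀ l₁ l₂, l₂.length ≤ n + 1 → l₁.Sublist l₂ → F l₁ ≤ F l₂) (k : κ) :
    ¬ ∀ σ : Fin (n + 1) → List Λ, IsSublistChain σ → c (fun i => F (σ i)) = k := by
  intro hk
  obtain ⟨a⟩ := ‹Nonempty Λ›
  set i := d k
  obtain ⟨x, hx⟩ := exists_gt (F (List.replicate (i + 1) a))
  set L := List.replicate (i + 1) a ++ List.replicate (n + 1 - i) x
  have hL : n + 2 ≤ L.length := by simp [L]; omega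
  set σ := fun j : Fin (n + 1) => L.take (j + 1)
  set τ := Function.update σ i ((L.take (i + 2)).eraseIdx i)
  have hσ := hk σ (isSublistChain_take (by omega))
  have hτ := hk τ (isSublistChain_update_eraseIdx hL i)
  have hFστ : F (σ i) = F (τ i) := by
    refine congrFun (hc (by simp) (by simp) (hσ.trans hτ.symm) fun j hj => ?_) i
    rw [hσ] at hj
    exact congrArg F (Function.update_of_ne hj _ _).symm
  have hσi : σ i = List.replicate (i + 1) a := List.take_left' (by simp)
  have hxτ : x ∈ τ i := by
    simp only [τ, L, Function.update_self]
    rw [List.take_append, List.eraseIdx_append_of_lt_length (by simp)]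
    exact List.mem_append_right _ (by simp; omega)
  have hτlen : (τ i).length ≤ n + 1 := by
    rw [(isSublistChain_update_eraseIdx hL i).1 i]; omega
  refine not_le_of_gt hx ?_
  calc x ≤ F [x] := hF₁ x
    _ ≤ F (τ i) := hF₂ _ _ hτlen (List.singleton_sublist.mpr hxτ)
    _ = F (List.replicate (i + 1) a) := by rw [← hFστ, hσi]

end Chain

/-- For all `n < ω`, the Partition Hypothesis `PH_n(ω_n)` fails: there is a coloring
`c : (ω_n)^{n+1} → ω` such that for no `(n+1)`-cofinal function
`F : (ω_n)^{≤ n+1} → ω_n` (here defined on all finite lists, with the cofinality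
conditions imposed on lists of length `≤ n+1`) is `c ∘ F⁎` constant on
`(ω_n)^{⟦n+1⟧}`, the set of `⊴`-increasing sequences `σ` with `σ i` of length
`i + 1`. -/
theorem stmt15 (n : ℕ) :
    ∃ c : (Fin (n + 1) → {o : Ordinal // o < (Cardinal.aleph n).ord}) → ℕ,
      ∀ F : List {o : Ordinal // o < (Cardinal.aleph n).ord} →
          {o : Ordinal // o < (Cardinal.aleph n).ord},
        (∀ x, x ≤ F [x]) →
        (∀ l₁ l₂, l₂.length ≤ n + 1 → l₁.Sublist l₂ → F l₁ ≤ F l₂) →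
        ¬ ∃ k : ℕ, ∀ σ : Fin (n + 1) →
              List {o : Ordinal // o < (Cardinal.aleph n).ord},
            (∀ i : Fin (n + 1), (σ i).length = (i : ℕ) + 1) →
            (∀ i j : Fin (n + 1), i ≤ j → (σ i).Sublist (σ j)) →
            c (fun i => F (σ i)) = k := by
  have hlim := isSuccLimit_ord (aleph0_le_aleph (n : Ordinal))
  have : NoMaxOrder (Iio (ℵ_ n).ord) := hlim.isSuccPrelimit.noMaxOrder_Iio
  have : Nonempty (Iio (ℵ_ n).ord) := ⟨⟨0, hlim.bot_lt⟩⟩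
  have hcard : #(univ : Set (Iio (ℵ_ n).ord)) ≤ ℵ_ n := by
    simp [mk_Iio_ordinal]
  obtain ⟨c, d, hc⟩ := exists_isPivotalOn_of_card_le_aleph n hcard
  exact ⟨c, fun F hF₁ hF₂ ⟨k, hk⟩ =>
    not_forall_eq_of_isPivotalOn hc hF₁ hF₂ k fun σ hσ => hk σ hσ.1 hσ.2⟩
end

section
/- Suppose $\langle u_b : b \in [H]^n \rangle$ is a uniform $n$-dimensional $\Delta$-system with witnessing sets $\langle \mathbf{r}_{\mathbf{m}} : \mathbf{m} \subseteq n \rangle$, where $H$ is a set of ordinals. Then for any $m \leq n$ and $a \in [H]^m$, the set $u_b[\mathbf{r}_{\mathbf{m}_a}]$, where $b \in [H]^n$ satisfies $b[m] = a$ and $\mathbf{r}_{\mathbf{m}_a} = \mathbf{r}_{\{0,\ldots,m-1\}}$, does not depend on the choice of $b$. -/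
/-!
Call `b, c ∈ [H]^n` adjacent if they are aligned and have the same first `m` elements. For
adjacent `b, c`, property (3) gives `r_m = r_{m ∩ r(b,c)} ⊆ r_{r(b,c)} = r(u_b, u_c)`, so `u_b`
and `u_c` agree on the positions in `r_m`. Any two `b, b'` with the same first `m` elements are
joined by a chain of adjacent sets inside `b ∪ b' ⊆ H`: if `z` is the largest element of
`b ∆ b'`, say `z ∈ b'`, then replacing in `b` its largest element below `z` by `z` gives a set
adjacent to `b` whose symmetric difference with `b'` lies below `z`.
-/

/-- The `i`-th element (in increasing order) of a finite set of ordinals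
(junk value `0` if `i` is out of range). -/
noncomputable def nth (s : Finset Ordinal) (i : ℕ) : Ordinal :=
  (s.sort (· ≤ ·)).getD i 0

/-- Two finite sets of ordinals are aligned if they have the same order type
(cardinality) and every common element occupies the same relative position in both. -/
def Aligned (a b : Finset Ordinal) : Prop :=
  a.card = b.card ∧
  ∀ γ ∈ a ∩ b, (a.filter (fun x => x < γ)).card = (b.filter (fun x => x < γ)).card

/-- `rset a b = {i < |a| : a(i) = b(i)}` for aligned sets `a, b`. -/
noncomputable def rset (a b : Finset Ordinal) : Finset ℕ :=
  (Finset.range a.card).filter (fun i => nth a i = nth b i)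

/-- `⟨u b : b ∈ [H]^n⟩` is a uniform `n`-dimensional `Δ`-system with witnesses
`ρ` and `⟨rr m : m ⊆ n⟩`. -/
def IsUniformDeltaSystem (H : Set Ordinal) (n : ℕ) (u : Finset Ordinal → Finset Ordinal)
    (ρ : ℕ) (rr : Finset ℕ → Finset ℕ) : Prop :=
  (∀ b : Finset Ordinal, ↑b ⊆ H → b.card = n → (u b).card = ρ) ∧
  (∀ a b : Finset Ordinal, ↑a ⊆ H → ↑b ⊆ H → a.card = n → b.card = n →
    Aligned a b → (Aligned (u a) (u b) ∧ rset (u a) (u b) = rr (rset a b))) ∧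
  (∀ m₀ m₁ : Finset ℕ, m₀ ⊆ Finset.range n → m₁ ⊆ Finset.range n →
    rr (m₀ ∩ m₁) = rr m₀ ∩ rr m₁)

open Finset
open scoped symmDiff

section Enumeration

variable {s : Finset Ordinal} {i j : ℕ}

lemma nth_eq_orderEmbOfFin (hi : i < s.card) : nth s i = s.orderEmbOfFin rfl ⟨i, hi⟩ := by
  rw [nth, orderEmbOfFin_apply, List.getD_eq_getElem?_getD,
    List.getElem?_eq_getElem (by rwa [length_sort])]
  rfl

lemma nth_mem (hi : i < s.card) : nth s i ∈ s := by
  rw [nth_eq_orderEmbOfFin hi]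
  exact orderEmbOfFin_mem s rfl _

lemma nth_lt_nth (hij : i < j) (hj : j < s.card) : nth s i < nth s j := by
  rw [nth_eq_orderEmbOfFin (hij.trans hj), nth_eq_orderEmbOfFin hj]
  exact (s.orderEmbOfFin rfl).strictMono (Fin.mk_lt_mk.2 hij)

lemma nth_strictMonoOn : StrictMonoOn (nth s) (Set.Iio s.card) :=
  fun _ _ _ hj hij => nth_lt_nth hij hj

lemma exists_nth_eq {x : Ordinal} (hx : x ∈ s) : ∃ i < s.card, nth s i = x := by
  rw [← mem_coe, ← range_orderEmbOfFin s rfl] at hx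
  obtain ⟨⟨i, hi⟩, rfl⟩ := hx
  exact ⟨i, hi, nth_eq_orderEmbOfFin hi⟩

lemma card_filter_lt_nth (hi : i < s.card) : (s.filter (· < nth s i)).card = i := by
  have hfilter : s.filter (· < nth s i) = (range i).image (nth s) := by
    ext x
    simp only [mem_filter, mem_image, mem_range]
    constructor
    · rintro ⟨hx, hlt⟩
      obtain ⟨j, hj, rfl⟩ := exists_nth_eq hx
      exact ⟨j, (nth_strictMonoOn.lt_iff_lt hj hi).1 hlt, rfl⟩
    · rintro ⟨j, hji, rfl⟩
      exact ⟨nth_mem (hji.trans hi), nth_lt_nth hji hi⟩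
  rw [hfilter, card_image_of_injOn, card_range]
  exact nth_strictMonoOn.injOn.mono fun j hj => (mem_range.1 hj).trans hi

lemma nth_eq_orderEmbOfFin_of_image_range {a : Finset Ordinal} {m : ℕ} (hm : m ≤ s.card)
    (hs : (range m).image (nth s) = a) (ha : a.card = m) (i : Fin m) :
    nth s i = a.orderEmbOfFin ha i :=
  congrFun (orderEmbOfFin_unique ha (f := fun j : Fin m => nth s j)
    (fun j => hs ▸ mem_image_of_mem _ (mem_range.2 j.2))
    (fun _ j hij => nth_lt_nth hij (j.2.trans_le hm))) i

end Enumeration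

lemma Aligned.nth_eq_of_nth_mem {b c : Finset Ordinal} (hbc : Aligned b c) {i : ℕ}
    (hi : i < b.card) (hc : nth b i ∈ c) : nth c i = nth b i := by
  obtain ⟨j, hj, hji⟩ := exists_nth_eq hc
  have hrank := hbc.2 (nth b i) (mem_inter.2 ⟨nth_mem hi, hc⟩)
  rw [card_filter_lt_nth hi, ← hji, card_filter_lt_nth hj] at hrank
  subst hrank
  exact hji

lemma aligned_insert_erase {b : Finset Ordinal} {x z : Ordinal} (hx : x ∈ b) (hz : z ∉ b)
    (hxz : x < z) (hgap : ∀ γ ∈ b, γ < z → γ ≤ x) : Aligned b (insert z (b.erase x)) := by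
  refine ⟨?_, fun γ hγ => ?_⟩
  · rw [card_insert_of_notMem fun h => hz (mem_of_mem_erase h), card_erase_of_mem hx,
      Nat.sub_add_cancel (card_pos.2 ⟨x, hx⟩)]
  obtain ⟨hγb, hγc⟩ := mem_inter.1 hγ
  have hγz : γ ≠ z := ne_of_mem_of_not_mem hγb hz
  have hγx : γ ≠ x := (mem_erase.1 ((mem_insert.1 hγc).resolve_left hγz)).1
  rw [filter_insert, filter_erase]
  rcases hγz.lt_or_gt with hγz | hzγ
  · have hxγ : ¬ x < γ := (lt_of_le_of_ne (hgap γ hγb hγz) hγx).not_gt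
    rw [if_neg hγz.not_gt,
      erase_eq_of_notMem (s := b.filter (· < γ)) fun h => hxγ (mem_filter.1 h).2]
  · have hxmem : x ∈ b.filter (· < γ) := mem_filter.2 ⟨hx, hxz.trans hzγ⟩
    rw [if_pos hzγ, card_insert_of_notMem fun h => hz (mem_filter.1 (mem_of_mem_erase h)).1,
      card_erase_of_mem hxmem, Nat.sub_add_cancel (card_pos.2 ⟨x, hxmem⟩)]

lemma exists_aligned_swap {b b' : Finset Ordinal} (hcard : b.card = b'.card) {m : ℕ}
    (hpre : ∀ i < m, nth b i = nth b' i) {z : Ordinal} (hzb' : z ∈ b') (hzb : z ∉ b)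
    (hzmax : ∀ w ∈ b ∆ b', w ≤ z) :
    ∃ c ⊆ insert z b, c.card = b.card ∧ Aligned b c ∧ (∀ i < m, nth b i = nth c i) ∧
      ∀ w ∈ c ∆ b', w < z := by
  have hlt : ∀ w ∈ b ∆ b', w ≠ z → w < z := fun w hw => lt_of_le_of_ne (hzmax w hw)
  obtain ⟨x₀, hx₀⟩ : (b \ b').Nonempty := by
    rw [← card_pos, card_sdiff_comm hcard]
    exact card_pos.2 ⟨z, mem_sdiff.2 ⟨hzb', hzb⟩⟩
  obtain ⟨hx₀b, hx₀b'⟩ := mem_sdiff.1 hx₀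
  have hx₀z : x₀ < z :=
    hlt x₀ (mem_symmDiff.2 (Or.inl ⟨hx₀b, hx₀b'⟩)) (ne_of_mem_of_not_mem hx₀b hzb)
  have hne : (b.filter (· < z)).Nonempty := ⟨x₀, mem_filter.2 ⟨hx₀b, hx₀z⟩⟩
  set x := (b.filter (· < z)).max' hne
  obtain ⟨hxb, hxz⟩ := mem_filter.1 ((b.filter (· < z)).max'_mem hne)
  have hgap : ∀ γ ∈ b, γ < z → γ ≤ x := fun γ hγ hγz =>
    le_max' (b.filter (· < z)) γ (mem_filter.2 ⟨hγ, hγz⟩)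
  -- `x₀ ∉ b'`, so `x₀` lies beyond the common prefix of `b` and `b'`.
  obtain ⟨j, hj, rfl⟩ := exists_nth_eq hx₀b
  have hmj : m ≤ j := by
    by_contra! hjm
    exact hx₀b' (hpre j hjm ▸ nth_mem (hcard ▸ hj))
  have hal := aligned_insert_erase hxb hzb hxz hgap
  refine ⟨insert z (b.erase x), insert_subset_insert _ (erase_subset _ _), hal.1.symm, hal,
    fun i hi => ?_, fun w hw => ?_⟩
  · have hib : i < b.card := (hi.trans_le hmj).trans hj
    have hix : nth b i < x := (nth_lt_nth (hi.trans_le hmj) hj).trans_le (hgap _ hx₀b hx₀z)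
    exact (hal.nth_eq_of_nth_mem hib
      (mem_insert_of_mem (mem_erase.2 ⟨hix.ne, nth_mem hib⟩))).symm
  rcases mem_symmDiff.1 hw with ⟨hwc, hwb'⟩ | ⟨hwb', hwc⟩
  · have hwz : w ≠ z := by rintro rfl; exact hwb' hzb'
    have hwb : w ∈ b := mem_of_mem_erase ((mem_insert.1 hwc).resolve_left hwz)
    exact hlt w (mem_symmDiff.2 (Or.inl ⟨hwb, hwb'⟩)) hwz
  · have hwz : w ≠ z := by rintro rfl; exact hwc (mem_insert_self _ _)
    by_cases hwb : w ∈ b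
    · have hwx : w = x := by
        by_contra h
        exact hwc (mem_insert_of_mem (mem_erase.2 ⟨h, hwb⟩))
      exact hwx ▸ hxz
    · exact hlt w (mem_symmDiff.2 (Or.inr ⟨hwb', hwb⟩)) hwz

namespace IsUniformDeltaSystem

variable {H : Set Ordinal} {n : ℕ} {u : Finset Ordinal → Finset Ordinal} {ρ : ℕ}
  {rr : Finset ℕ → Finset ℕ} {m : ℕ}

theorem image_nth_eq_of_aligned (hu : IsUniformDeltaSystem H n u ρ rr) (hm : m ≤ n)
    {b c : Finset Ordinal} (hb : ↑b ⊆ H) (hc : ↑c ⊆ H) (hbn : b.card = n) (hcn : c.card = n)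
    (hbc : Aligned b c) (hpre : ∀ i < m, nth b i = nth c i) :
    (rr (range m)).image (nth (u b)) = (rr (range m)).image (nth (u c)) := by
  have hrange : range m ⊆ rset b c := fun i hi =>
    mem_filter.2 ⟨hbn ▸ range_subset_range.2 hm hi, hpre i (mem_range.1 hi)⟩
  have hrset : rset b c ⊆ range n := hbn ▸ filter_subset _ _
  have hsub : rr (range m) ⊆ rset (u b) (u c) :=
    calc rr (range m) = rr (range m ∩ rset b c) := by rw [inter_eq_left.2 hrange]
      _ = rr (range m) ∩ rr (rset b c) := hu.2.2 _ _ (range_subset_range.2 hm) hrset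
      _ ⊆ rr (rset b c) := inter_subset_right
      _ = rset (u b) (u c) := (hu.2.1 b c hb hc hbn hcn hbc).2.symm
  exact image_congr fun j hj => (mem_filter.1 (hsub hj)).2

theorem image_nth_eq_of_nth_eq (hu : IsUniformDeltaSystem H n u ρ rr) (hm : m ≤ n)
    {b b' : Finset Ordinal} (hb : ↑b ⊆ H) (hb' : ↑b' ⊆ H) (hbn : b.card = n)
    (hb'n : b'.card = n) (hpre : ∀ i < m, nth b i = nth b' i) :
    (rr (range m)).image (nth (u b)) = (rr (range m)).image (nth (u b')) := by
  suffices h : ∀ M : Ordinal, ∀ b b' : Finset Ordinal, ↑b ⊆ H → ↑b' ⊆ H → b.card = n →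
      b'.card = n → (∀ i < m, nth b i = nth b' i) → (∀ w ∈ b ∆ b', w < M) →
      (rr (range m)).image (nth (u b)) = (rr (range m)).image (nth (u b')) from
    h _ b b' hb hb' hbn hb'n hpre fun w hw => Order.lt_succ_of_le (le_sup (f := id) hw)
  intro M
  induction M using WellFoundedLT.induction with
  | _ M IH =>
  intro b b' hb hb' hbn hb'n hpre hM
  obtain rfl | hbb' := eq_or_ne b b'
  · rfl
  have hne : (b ∆ b').Nonempty := symmDiff_nonempty.2 hbb'
  set z := (b ∆ b').max' hne
  have hzmax : ∀ w ∈ b ∆ b', w ≤ z := fun w hw => le_max' _ w hw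
  have hzM : z < M := hM z (max'_mem _ hne)
  have swap : ∀ {c c' : Finset Ordinal}, ↑c ⊆ H → ↑c' ⊆ H → c.card = n → c'.card = n →
      (∀ i < m, nth c i = nth c' i) → z ∈ c' → z ∉ c → (∀ w ∈ c ∆ c', w ≤ z) →
      (rr (range m)).image (nth (u c)) = (rr (range m)).image (nth (u c')) := by
    intro c c' hc hc' hcn hc'n hpre hzc' hzc hzmax
    obtain ⟨d, hdc, hdn, hcd, hpre', hdz⟩ :=
      exists_aligned_swap (hcn.trans hc'n.symm) hpre hzc' hzc hzmax
    have hd : ↑d ⊆ H := fun w hw => by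
      rcases mem_insert.1 (hdc hw) with rfl | hw
      exacts [hc' hzc', hc hw]
    calc (rr (range m)).image (nth (u c)) = (rr (range m)).image (nth (u d)) :=
          hu.image_nth_eq_of_aligned hm hc hd hcn (hdn.trans hcn) hcd hpre'
      _ = (rr (range m)).image (nth (u c')) :=
          IH z hzM d c' hd hc' (hdn.trans hcn) hc'n
            (fun i hi => (hpre' i hi).symm.trans (hpre i hi)) hdz
  rcases mem_symmDiff.1 (max'_mem _ hne) with ⟨hzb, hzb'⟩ | ⟨hzb', hzb⟩
  · exact (swap hb' hb hb'n hbn (fun i hi => (hpre i hi).symm) hzb hzb'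
      (symmDiff_comm b b' ▸ hzmax)).symm
  · exact swap hb hb' hbn hb'n hpre hzb' hzb hzmax

end IsUniformDeltaSystem

theorem stmt18_general (H : Set Ordinal) (n : ℕ) (u : Finset Ordinal → Finset Ordinal)
    (ρ : ℕ) (rr : Finset ℕ → Finset ℕ)
    (hu : IsUniformDeltaSystem H n u ρ rr)
    (m : ℕ) (hm : m ≤ n) (a : Finset Ordinal) (hacard : a.card = m)
    (b b' : Finset Ordinal) (hb : ↑b ⊆ H) (hb' : ↑b' ⊆ H)
    (hbcard : b.card = n) (hb'card : b'.card = n)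
    (hba : (Finset.range m).image (nth b) = a)
    (hb'a : (Finset.range m).image (nth b') = a) :
    (rr (Finset.range m)).image (nth (u b)) = (rr (Finset.range m)).image (nth (u b')) := by
  have hpre : ∀ i < m, nth b i = nth b' i := fun i hi => by
    rw [nth_eq_orderEmbOfFin_of_image_range (hbcard ▸ hm) hba hacard ⟨i, hi⟩,
      nth_eq_orderEmbOfFin_of_image_range (hb'card ▸ hm) hb'a hacard ⟨i, hi⟩]
  exact hu.image_nth_eq_of_nth_eq hm hb hb' hbcard hb'card hpre

/-- For a uniform `n`-dimensional `Δ`-system `⟨u b : b ∈ [H]^n⟩`, given `m ≤ n` and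
`a ∈ [H]^m`, the set `u_b[r_{{0,…,m-1}}]` does not depend on the choice of
`b ∈ [H]^n` with `b[m] = a` (i.e. whose first `m` elements form the set `a`). -/
theorem stmt18 (H : Set Ordinal) (n : ℕ) (u : Finset Ordinal → Finset Ordinal)
    (ρ : ℕ) (rr : Finset ℕ → Finset ℕ)
    (hu : IsUniformDeltaSystem H n u ρ rr)
    (m : ℕ) (hm : m ≤ n) (a : Finset Ordinal) (ha : ↑a ⊆ H) (hacard : a.card = m)
    (b b' : Finset Ordinal) (hb : ↑b ⊆ H) (hb' : ↑b' ⊆ H)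
    (hbcard : b.card = n) (hb'card : b'.card = n)
    (hba : (Finset.range m).image (nth b) = a)
    (hb'a : (Finset.range m).image (nth b') = a) :
    (rr (Finset.range m)).image (nth (u b)) = (rr (Finset.range m)).image (nth (u b')) :=
  stmt18_general H n u ρ rr hu m hm a hacard b b' hb hb' hbcard hb'card hba hb'a
end
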